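/- arXiv:1012.4927 — 8 statements merged into one kernel-verified Lean document; each statement's English description precedes it below -/
import Mathlib

section
/- The adjoint of the densely defined operator T : H_A ⊇ dom(A*A) → H₁, T f = A*(A f), is the operator J_A : H₁ ⊇ dom(A) → H_A acting as the identity map f ↦ f; conversely, the adjoint of J_A equals T, i.e., (A*A ι_A)* = J_A and J_A* = A*A ι_A. -/
/-!
With `T = A*A ι`, the identity `⟪A*A ι f, ι g⟫ = ⟪A ι f, A ι g⟫ = ⟪f, g⟫_A` says that `T` is a
formal adjoint of `J`. Both are onto: `J` trivially, and `T` because the Riesz representative in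
`H_A` of `g ↦ ⟪y, ι g⟫` (bounded, by coercivity) is a preimage of `y`. For two mutually formally
adjoint surjections `T` and `S`, the adjoint `T*` extends `S` and is injective since `T` is onto;
an injective extension of a surjection is that surjection, so `T* = S`, and symmetrically `S* = T`.
-/

open scoped InnerProductSpace

namespace LinearPMap

theorem eq_of_le_of_surjective_of_injective {R E F : Type*} [Ring R] [AddCommGroup E]
    [Module R E] [AddCommGroup F] [Module R F] {S U : E →ₗ.[R] F} (hle : S ≤ U)
    (hS : Function.Surjective S) (hU : Function.Injective U) : S = U := by
  refine le_antisymm hle ⟨fun x hx => ?_, fun x y hxy => (hle.2 hxy.symm).symm⟩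
  obtain ⟨z, hz⟩ := hS (U ⟨x, hx⟩)
  have hzx : (⟨z, hle.1 z.2⟩ : U.domain) = ⟨x, hx⟩ := hU ((hle.2 rfl).symm.trans hz)
  obtain rfl : (z : E) = x := congrArg Subtype.val hzx
  exact z.2

variable {𝕜 E F : Type*} [RCLike 𝕜] [NormedAddCommGroup E] [InnerProductSpace 𝕜 E]
  [NormedAddCommGroup F] [InnerProductSpace 𝕜 F] {T : E →ₗ.[𝕜] F} {S : F →ₗ.[𝕜] E}

theorem IsFormalAdjoint.dense_domain [CompleteSpace E] (h : T.IsFormalAdjoint S)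
    (hT : Function.Surjective T) (hS : Function.Surjective S) : Dense (T.domain : Set E) := by
  rw [Submodule.dense_iff_topologicalClosure_eq_top, Submodule.topologicalClosure_eq_top_iff,
    Submodule.eq_bot_iff]
  intro v hv
  obtain ⟨y, rfl⟩ := hS v
  obtain ⟨x, hx⟩ := hT y
  have hy : y = 0 := by
    rw [Subtype.ext_iff, ZeroMemClass.coe_zero, ← inner_self_eq_zero (𝕜 := 𝕜)]
    calc ⟪(y : F), y⟫_𝕜 = ⟪(x : E), S y⟫_𝕜 := by rw [← h x y, hx]
      _ = 0 := hv _ x.2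
  simp [hy]

theorem adjoint_injective [CompleteSpace E] (hdense : Dense (T.domain : Set E))
    (hT : Function.Surjective T) : Function.Injective T† := by
  refine (injective_iff_map_eq_zero T†.toFun).mpr fun y hy => Subtype.ext ?_
  refine ext_inner_left 𝕜 fun z => ?_
  obtain ⟨x, rfl⟩ := hT z
  rw [(adjoint_isFormalAdjoint hdense).symm x y, show T† y = 0 from hy, ZeroMemClass.coe_zero, inner_zero_right, inner_zero_right]

theorem IsFormalAdjoint.adjoint_eq [CompleteSpace E] (h : T.IsFormalAdjoint S)
    (hT : Function.Surjective T) (hS : Function.Surjective S) : T† = S :=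
  have hdense := h.dense_domain hT hS
  (eq_of_le_of_surjective_of_injective (h.le_adjoint hdense) hS (adjoint_injective hdense hT)).symm

end LinearPMap

section CoerciveForm

open LinearPMap

variable {𝕜 H₁ H₂ HA : Type*} [RCLike 𝕜]
  [NormedAddCommGroup H₁] [InnerProductSpace 𝕜 H₁]
  [NormedAddCommGroup H₂] [InnerProductSpace 𝕜 H₂]
  [NormedAddCommGroup HA] [InnerProductSpace 𝕜 HA]
  {A : H₁ →ₗ.[𝕜] H₂} {ι : HA →ₗ[𝕜] H₁} (hmem : ∀ f : HA, ι f ∈ A.domain)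
  (hinner : ∀ f g : HA, ⟪f, g⟫_𝕜 = ⟪A ⟨ι f, hmem f⟩, A ⟨ι g, hmem g⟩⟫_𝕜)
include hinner

theorem continuous_of_inner_eq_of_coercive {ε : ℝ} (hε : 0 < ε)
    (hcoercive : ∀ f : A.domain, ε * ‖(f : H₁)‖ ^ 2 ≤ ‖A f‖ ^ 2) : Continuous ι := by
  refine AddMonoidHomClass.continuous_of_bound ι (√ε)⁻¹ fun g => ?_
  have hnorm : ‖g‖ = ‖A ⟨ι g, hmem g⟩‖ := by
    rw [norm_eq_sqrt_re_inner (𝕜 := 𝕜), norm_eq_sqrt_re_inner (𝕜 := 𝕜), hinner]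
  rw [inv_mul_eq_div, le_div_iff₀ (Real.sqrt_pos.2 hε),
    ← pow_le_pow_iff_left₀ (by positivity) (norm_nonneg _) two_ne_zero, mul_pow,
    Real.sq_sqrt hε.le, mul_comm, hnorm]
  exact hcoercive ⟨ι g, hmem g⟩

theorem inner_adjoint_apply_eq [CompleteSpace H₁] (hdense : Dense (A.domain : Set H₁)) (u : HA)
    (hu : A ⟨ι u, hmem u⟩ ∈ A†.domain) (g : HA) :
    ⟪A† ⟨A ⟨ι u, hmem u⟩, hu⟩, ι g⟫_𝕜 = ⟪u, g⟫_𝕜 :=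
  (adjoint_isFormalAdjoint hdense ⟨_, hu⟩ ⟨ι g, hmem g⟩).trans (hinner u g).symm

theorem exists_adjoint_apply_eq [CompleteSpace H₁] [CompleteSpace HA]
    (hdense : Dense (A.domain : Set H₁)) (hι : Continuous ι)
    (hsurj : ∀ x ∈ A.domain, ∃ f : HA, ι f = x) (y : H₁) :
    ∃ (u : HA) (hu : A ⟨ι u, hmem u⟩ ∈ A†.domain), A† ⟨A ⟨ι u, hmem u⟩, hu⟩ = y := by
  set u := (InnerProductSpace.toDual 𝕜 HA).symm ((innerSL 𝕜 y).comp ⟨ι, hι⟩)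
  have hrepr : ∀ x : A.domain, ⟪y, (x : H₁)⟫_𝕜 = ⟪A ⟨ι u, hmem u⟩, A x⟫_𝕜 := by
    rintro ⟨x, hx⟩
    obtain ⟨g, rfl⟩ := hsurj x hx
    exact InnerProductSpace.toDual_symm_apply.symm.trans (hinner u g)
  have hu : A ⟨ι u, hmem u⟩ ∈ A†.domain := mem_adjoint_domain_of_exists _ ⟨y, hrepr⟩
  exact ⟨u, hu, adjoint_apply_eq hdense _ hrepr⟩

end CoerciveForm

theorem adjoint_of_AstarA_iota_eq_J_general
    {H₁ H₂ HA : Type*}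
    [NormedAddCommGroup H₁] [InnerProductSpace ℂ H₁] [CompleteSpace H₁]
    [NormedAddCommGroup H₂] [InnerProductSpace ℂ H₂]
    [NormedAddCommGroup HA] [InnerProductSpace ℂ HA] [CompleteSpace HA]
    (A : H₁ →ₗ.[ℂ] H₂)
    (hdense : Dense (A.domain : Set H₁))
    (ε : ℝ) (hε : 0 < ε)
    (hcoercive : ∀ f : A.domain, ε * ‖(f : H₁)‖ ^ 2 ≤ ‖A f‖ ^ 2)
    -- `ι = ι_A : HA → H₁`, a linear bijection from `HA` onto `dom(A)`:
    (ι : HA →ₗ[ℂ] H₁)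
    (hmem : ∀ f : HA, ι f ∈ A.domain)
    (hsurj : ∀ x ∈ A.domain, ∃ f : HA, ι f = x)
    (hinj : Function.Injective ι)
    -- the inner product of `HA` is `(f,g)_A = ⟪A ι f, A ι g⟫`:
    (hinner : ∀ f g : HA, ⟪f, g⟫_ℂ = ⟪A ⟨ι f, hmem f⟩, A ⟨ι g, hmem g⟩⟫_ℂ)
    -- `T = A* A ι_A : HA ⊇ dom(A* A ι_A) → H₁`:
    (T : HA →ₗ.[ℂ] H₁)
    (hTdom : ∀ f : HA, f ∈ T.domain ↔ A ⟨ι f, hmem f⟩ ∈ A.adjoint.domain)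
    (hTval : ∀ (f : T.domain) (h : A ⟨ι (f : HA), hmem (f : HA)⟩ ∈ A.adjoint.domain),
      T f = A.adjoint ⟨A ⟨ι (f : HA), hmem (f : HA)⟩, h⟩)
    -- `J = J_A : H₁ ⊇ dom(A) → HA`, `f ↦ f` (i.e. `ι (J f) = f`):
    (J : H₁ →ₗ.[ℂ] HA)
    (hJdom : J.domain = A.domain)
    (hJval : ∀ f : J.domain, ι (J f) = (f : H₁)) :
    Dense (T.domain : Set HA) ∧ T.adjoint = J ∧ J.adjoint = T := by
  have hTJ : T.IsFormalAdjoint J := fun f y => by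
    have hf := (hTdom f).mp f.2
    rw [hTval f hf, ← hJval y]
    exact inner_adjoint_apply_eq hmem hinner hdense _ hf _
  have hTsurj : Function.Surjective T := fun y => by
    obtain ⟨u, hu, rfl⟩ := exists_adjoint_apply_eq hmem hinner hdense
      (continuous_of_inner_eq_of_coercive hmem hinner hε hcoercive) hsurj y
    exact ⟨⟨u, (hTdom u).mpr hu⟩, hTval _ hu⟩
  have hJsurj : Function.Surjective J := fun g =>
    ⟨⟨ι g, hJdom ▸ hmem g⟩, hinj (hJval _)⟩
  exact ⟨hTJ.dense_domain hTsurj hJsurj, hTJ.adjoint_eq hTsurj hJsurj,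
    hTJ.symm.adjoint_eq hJsurj hTsurj⟩

/-- Lemma 2.7. Let `A : dom(A) ⊆ H₁ → H₂` be densely defined, closed with
`A*A ≥ ε I` for some `ε > 0`.  Let `HA` be the Hilbert space consisting of `dom(A)` with the
inner product `(f,g)_A = ⟪Af, Ag⟫`, realized via the linear bijection `ι : HA → dom(A) ⊆ H₁`
(so `ι = ι_A` is the embedding and `J = J_A = ι_A⁻¹ : H₁ ⊇ dom(A) → HA` is the identity map).
Let `T = A* A ι_A` be the operator `HA ⊇ dom(A*A) → H₁`, `f ↦ A*(A f)`.
Then `(A*A ι_A)* = J_A` and `J_A* = A*A ι_A`. -/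
theorem adjoint_of_AstarA_iota_eq_J
    {H₁ H₂ HA : Type*}
    [NormedAddCommGroup H₁] [InnerProductSpace ℂ H₁] [CompleteSpace H₁]
    [TopologicalSpace.SeparableSpace H₁]
    [NormedAddCommGroup H₂] [InnerProductSpace ℂ H₂] [CompleteSpace H₂]
    [TopologicalSpace.SeparableSpace H₂]
    [NormedAddCommGroup HA] [InnerProductSpace ℂ HA] [CompleteSpace HA]
    (A : H₁ →ₗ.[ℂ] H₂)
    (hdense : Dense (A.domain : Set H₁))
    (hclosed : A.IsClosed)
    (ε : ℝ) (hε : 0 < ε)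
    (hcoercive : ∀ f : A.domain, ε * ‖(f : H₁)‖ ^ 2 ≤ ‖A f‖ ^ 2)
    -- `ι = ι_A : HA → H₁`, a linear bijection from `HA` onto `dom(A)`:
    (ι : HA →ₗ[ℂ] H₁)
    (hmem : ∀ f : HA, ι f ∈ A.domain)
    (hsurj : ∀ x ∈ A.domain, ∃ f : HA, ι f = x)
    (hinj : Function.Injective ι)
    -- the inner product of `HA` is `(f,g)_A = ⟪A ι f, A ι g⟫`:
    (hinner : ∀ f g : HA, ⟪f, g⟫_ℂ = ⟪A ⟨ι f, hmem f⟩, A ⟨ι g, hmem g⟩⟫_ℂ)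
    -- `T = A* A ι_A : HA ⊇ dom(A* A ι_A) → H₁`:
    (T : HA →ₗ.[ℂ] H₁)
    (hTdom : ∀ f : HA, f ∈ T.domain ↔ A ⟨ι f, hmem f⟩ ∈ A.adjoint.domain)
    (hTval : ∀ (f : T.domain) (h : A ⟨ι (f : HA), hmem (f : HA)⟩ ∈ A.adjoint.domain),
      T f = A.adjoint ⟨A ⟨ι (f : HA), hmem (f : HA)⟩, h⟩)
    -- `J = J_A : H₁ ⊇ dom(A) → HA`, `f ↦ f` (i.e. `ι (J f) = f`):
    (J : H₁ →ₗ.[ℂ] HA)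
    (hJdom : J.domain = A.domain)
    (hJval : ∀ f : J.domain, ι (J f) = (f : H₁)) :
    Dense (T.domain : Set HA) ∧ T.adjoint = J ∧ J.adjoint = T :=
  adjoint_of_AstarA_iota_eq_J_general A hdense ε hε hcoercive ι hmem hsurj hinj hinner T hTdom hTval
    J hJdom hJval
end

section
/- The operator G_{A,0} in H_A ⊕ H₁ defined by G_{A,0}(f,g) = (g, −A*(Af)) with domain dom(G_{A,0}) = dom(A*A) ⊕ dom(A) (where the first component is regarded as an element of H_A and the second of H₁) has the property that i·G_{A,0} is self-adjoint in H_A ⊕ H₁. Moreover, with K_A = ran(A) (a closed subspace of H₂), Ã : H_A → K_A the unitary operator f ↦ Af, and U = [[0, I_{H₁}],[−iÃ, 0]] : H_A ⊕ H₁ → H₁ ⊕ K_A (a unitary operator), one has the operator equality U (i G_{A,0}) U^{-1} = [[0, A*(I_{H₂} − P_{ker(A*)})],[A, 0]], the latter having domain dom(A) ⊕ {g ∈ dom(A*) : g ∈ K_A}. -/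
/-!
In the graph picture, `(x, y) ∈ graph G` means `ι y₁ = x₂` and `(Ã x₁, -y₂) ∈ graph A*`, while
`(u, w) ∈ graph D` means `(u₁, w₂) ∈ graph A` and `(u₂, w₁) ∈ graph A*`; `P` drops out of `D`
because it maps into `ker A*`. Under `U` the two descriptions agree up to scaling by `-i`, which is
the unitary equivalence.

For self-adjointness: `iG` is symmetric since `⟪G x, y⟫ = -⟪x, G y⟫` by the definition of `A*`; it
is densely defined since `{f : Ã f ∈ dom A*}` is dense in `H_A`; and `dom (iG)* ⊆ dom G` is seen by
testing against the elements `(0, ι g)` and `(f, 0)` of `dom G`. Both of the last two steps use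
`A** = A` with test vectors restricted to `K`, which is harmless because `Kᗮ ⊆ ker A*`.
-/

open scoped InnerProductSpace LinearPMap

namespace LinearPMap

variable {𝕜 E F : Type*} [RCLike 𝕜] [NormedAddCommGroup E] [InnerProductSpace 𝕜 E]
  [NormedAddCommGroup F] [InnerProductSpace 𝕜 F] [CompleteSpace E] {A : E →ₗ.[𝕜] F}

theorem mem_graph_adjoint_iff (hA : Dense (A.domain : Set E)) {a : F} {b : E} :
    (a, b) ∈ A†.graph ↔ ∀ u v, (u, v) ∈ A.graph → ⟪b, u⟫_𝕜 = ⟪a, v⟫_𝕜 := by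
  rw [adjoint_graph_eq_graph_adjoint hA, Submodule.mem_adjoint_iff]
  refine forall₂_congr fun u v => imp_congr_right fun _ => ?_
  rw [sub_eq_zero, ← inner_conj_symm b u, ← inner_conj_symm a v, (RingHom.injective _).eq_iff,
    eq_comm]

theorem mem_graph_of_forall_mem_graph_adjoint [CompleteSpace F] (hA : Dense (A.domain : Set E))
    (hc : A.IsClosed) {x : E} {y : F}
    (h : ∀ a b, (a, b) ∈ A†.graph → ⟪b, x⟫_𝕜 = ⟪a, y⟫_𝕜) : (x, y) ∈ A.graph := by
  let e := WithLp.prodContinuousLinearEquiv 2 𝕜 E F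
  let g : Submodule 𝕜 (WithLp 2 (E × F)) := A.graph.comap (e : WithLp 2 (E × F) →ₗ[𝕜] E × F)
  have hg : _root_.IsClosed (g : Set (WithLp 2 (E × F))) := hc.preimage e.continuous
  suffices WithLp.toLp 2 (x, y) ∈ gᗮᗮ by
    rwa [Submodule.orthogonal_orthogonal_eq_closure, hg.submodule_topologicalClosure_eq] at this
  intro w hw
  -- `w ⊥ graph A` says exactly that `(w₂, -w₁) ∈ graph A*`
  have hw' : (w.snd, -w.fst) ∈ A†.graph := by
    refine (mem_graph_adjoint_iff hA).2 fun u v huv => ?_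
    have := hw (WithLp.toLp 2 (u, v)) huv
    simp only [WithLp.prod_inner_apply, WithLp.ofLp_fst, WithLp.ofLp_snd] at this
    have := congrArg (starRingEnd 𝕜) this
    rw [_root_.map_add, inner_conj_symm, inner_conj_symm, _root_.map_zero] at this
    rw [inner_neg_left]
    linear_combination -this
  have := h _ _ hw'
  rw [inner_neg_left] at this
  show ⟪w.fst, x⟫_𝕜 + ⟪w.snd, y⟫_𝕜 = 0
  linear_combination -this

theorem mem_graph_of_forall_mem_graph_adjoint_of_mem [CompleteSpace F]
    (hA : Dense (A.domain : Set E)) (hc : A.IsClosed) {K : Submodule 𝕜 F}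
    [K.HasOrthogonalProjection] (hAK : ∀ u : A.domain, A u ∈ K) {x : E} {y : F} (hy : y ∈ K)
    (h : ∀ a b, a ∈ K → (a, b) ∈ A†.graph → ⟪b, x⟫_𝕜 = ⟪a, y⟫_𝕜) : (x, y) ∈ A.graph := by
  refine mem_graph_of_forall_mem_graph_adjoint hA hc fun a b hab => ?_
  have ha : a - K.starProjection a ∈ Kᗮ := K.sub_starProjection_mem_orthogonal a
  -- `Kᗮ ⊆ ker A†`, so only the component of `a` in `K` is seen by `A†`
  have hker : (a - K.starProjection a, (0 : E)) ∈ A†.graph := by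
    rw [mem_graph_adjoint_iff hA]
    rintro u v huv
    obtain ⟨u', -, rfl⟩ := A.mem_graph_iff.mp huv
    rw [inner_zero_left, Submodule.inner_left_of_mem_orthogonal (hAK u') ha]
  have hproj := h _ b (K.starProjection_apply_mem a) (by simpa using sub_mem hab hker)
  rw [hproj, eq_comm, ← sub_eq_zero, ← inner_sub_left,
    Submodule.inner_left_of_mem_orthogonal hy ha]

theorem IsFormalAdjoint.adjoint_eq_self {T : E →ₗ.[𝕜] E} (hsym : T.IsFormalAdjoint T)
    (hT : Dense (T.domain : Set E)) (hdom : T†.domain ≤ T.domain) : T† = T := by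
  have hle : T ≤ T† := hsym.le_adjoint hT
  exact le_antisymm (show T† ≤ T from ⟨hdom, fun x y hxy => (hle.2 hxy.symm).symm⟩) hle

end LinearPMap

theorem LinearPMap.mem_graph_smul_iff {k E F : Type*} [Field k] [AddCommGroup E] [Module k E]
    [AddCommGroup F] [Module k F] {T : E →ₗ.[k] F} {c : k} (hc : c ≠ 0) {x : E} {y : F} :
    (x, y) ∈ (c • T).graph ↔ (x, c⁻¹ • y) ∈ T.graph := by
  simp only [mem_graph_iff, smul_apply]
  constructor <;> rintro ⟨z, rfl, h⟩ <;> refine ⟨z, rfl, ?_⟩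
  · rw [← h, inv_smul_smul₀ hc]
  · rw [h, smul_inv_smul₀ hc]

open LinearPMap

section Generator

variable {H₁ H₂ HA : Type*}
  [NormedAddCommGroup H₁] [InnerProductSpace ℂ H₁]
  [NormedAddCommGroup H₂] [InnerProductSpace ℂ H₂]
  [NormedAddCommGroup HA] [InnerProductSpace ℂ HA]
  {A : H₁ →ₗ.[ℂ] H₂} {ι : HA →ₗ[ℂ] H₁} {hmem : ∀ f : HA, ι f ∈ A.domain}
  {K : Submodule ℂ H₂} {Atil : HA ≃ₗᵢ[ℂ] K}

theorem mk_coe_mem_graph_iff (hAtil : ∀ f : HA, (Atil f : H₂) = A ⟨ι f, hmem f⟩)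
    (hsurj : ∀ x ∈ A.domain, ∃ f : HA, ι f = x) {u : H₁} {g : HA} :
    (u, (Atil g : H₂)) ∈ A.graph ↔ ι g = u := by
  constructor
  · intro h
    obtain ⟨f, rfl⟩ := hsurj u (mem_domain_of_mem_graph h)
    have hfg : (Atil f : H₂) = Atil g := by
      rw [hAtil]
      exact A.mem_graph_snd_inj (A.mem_graph ⟨ι f, hmem f⟩) h rfl
    rw [Atil.injective (Subtype.ext hfg)]
  · rintro rfl
    rw [hAtil]
    exact A.mem_graph ⟨ι g, hmem g⟩

variable [CompleteSpace H₁]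

theorem mem_graph_adjoint_iff_forall_iota (hdense : Dense (A.domain : Set H₁))
    (hKA : ∀ x : A.domain, A x ∈ K) (hAtil : ∀ f : HA, (Atil f : H₂) = A ⟨ι f, hmem f⟩)
    (hsurj : ∀ x ∈ A.domain, ∃ f : HA, ι f = x) {a : H₂} {b : H₁} :
    (a, b) ∈ A†.graph ↔ ∀ g : HA, ⟪b, ι g⟫_ℂ = ⟪a, (Atil g : H₂)⟫_ℂ := by
  rw [mem_graph_adjoint_iff hdense]
  refine ⟨fun h g => h _ _ ((mk_coe_mem_graph_iff hAtil hsurj).2 rfl), fun h u v huv => ?_⟩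
  obtain ⟨u, rfl, rfl⟩ := A.mem_graph_iff.mp huv
  have hg : (Atil (Atil.symm ⟨A u, hKA u⟩) : H₂) = A u := by simp
  rw [← hg, ← h, (mk_coe_mem_graph_iff hAtil hsurj).1 (hg ▸ A.mem_graph u)]

theorem mem_graph_of_forall_inner_adjoint [CompleteSpace H₂] [CompleteSpace HA]
    (hdense : Dense (A.domain : Set H₁)) (hclosed : A.IsClosed) (hKA : ∀ x : A.domain, A x ∈ K)
    {x : H₁} {p : HA} (h : ∀ f b, ((Atil f : H₂), b) ∈ A†.graph → ⟪b, x⟫_ℂ = ⟪f, p⟫_ℂ) :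
    (x, (Atil p : H₂)) ∈ A.graph := by
  have : CompleteSpace K := Atil.symm.toIsometryEquiv.completeSpace
  refine mem_graph_of_forall_mem_graph_adjoint_of_mem hdense hclosed hKA (Atil p).2
    fun a b ha hab => ?_
  have hf : (Atil (Atil.symm ⟨a, ha⟩) : H₂) = a := by simp
  rw [h _ b (hf ▸ hab), ← Atil.inner_map_map, Submodule.coe_inner, hf]

variable {G : WithLp 2 (HA × H₁) →ₗ.[ℂ] WithLp 2 (HA × H₁)}

theorem mem_graph_generator_iff (hAtil : ∀ f : HA, (Atil f : H₂) = A ⟨ι f, hmem f⟩)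
    (hsurj : ∀ x ∈ A.domain, ∃ f : HA, ι f = x)
    (hGdom : ∀ x : WithLp 2 (HA × H₁), x ∈ G.domain ↔
      (A ⟨ι x.fst, hmem x.fst⟩ ∈ A.adjoint.domain ∧ x.snd ∈ A.domain))
    (hGval : ∀ (x : G.domain)
      (hf : A ⟨ι (x : WithLp 2 (HA × H₁)).fst, hmem (x : WithLp 2 (HA × H₁)).fst⟩ ∈
        A.adjoint.domain)
      (g' : HA), ι g' = (x : WithLp 2 (HA × H₁)).snd →
      G x = (WithLp.equiv 2 (HA × H₁)).symm
        (g', -(A.adjoint ⟨A ⟨ι (x : WithLp 2 (HA × H₁)).fst,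
          hmem (x : WithLp 2 (HA × H₁)).fst⟩, hf⟩)))
    (x y : WithLp 2 (HA × H₁)) :
    (x, y) ∈ G.graph ↔ ι y.fst = x.snd ∧ ((Atil x.fst : H₂), -y.snd) ∈ A†.graph := by
  constructor
  · intro h
    obtain ⟨x, rfl, rfl⟩ := G.mem_graph_iff.mp h
    obtain ⟨hf, hx⟩ := (hGdom x).1 x.2
    obtain ⟨g, hg⟩ := hsurj _ hx
    rw [hGval x hf g hg]
    refine ⟨hg, ?_⟩
    simpa [hAtil] using A†.mem_graph ⟨_, hf⟩
  · rintro ⟨hy, hxy⟩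
    rw [hAtil] at hxy
    have hx : x ∈ G.domain := (hGdom x).2 ⟨mem_domain_of_mem_graph hxy, hy ▸ hmem _⟩
    rw [← image_iff hx, hGval ⟨x, hx⟩ (mem_domain_of_mem_graph hxy) y.fst hy, WithLp.ext_iff]
    refine Prod.ext rfl (neg_eq_iff_eq_neg.1 ?_)
    exact A†.mem_graph_snd_inj hxy (A†.mem_graph _) rfl

theorem generator_mem_domain (hsurj : ∀ x ∈ A.domain, ∃ f : HA, ι f = x)
    (hG : ∀ x y, (x, y) ∈ G.graph ↔ ι y.fst = x.snd ∧ ((Atil x.fst : H₂), -y.snd) ∈ A†.graph)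
    {x : WithLp 2 (HA × H₁)} (h₁ : (Atil x.fst : H₂) ∈ A†.domain) (h₂ : x.snd ∈ A.domain) :
    x ∈ G.domain := by
  obtain ⟨g, hg⟩ := hsurj _ h₂
  refine mem_domain_of_mem_graph ((hG x (WithLp.toLp 2 (g, -A† ⟨_, h₁⟩))).2 ⟨hg, ?_⟩)
  simpa using A†.mem_graph ⟨_, h₁⟩

theorem dense_generator_domain [CompleteSpace H₂] [CompleteSpace HA]
    (hdense : Dense (A.domain : Set H₁)) (hclosed : A.IsClosed) (hKA : ∀ x : A.domain, A x ∈ K)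
    (hsurj : ∀ x ∈ A.domain, ∃ f : HA, ι f = x)
    (hG : ∀ x y, (x, y) ∈ G.graph ↔ ι y.fst = x.snd ∧ ((Atil x.fst : H₂), -y.snd) ∈ A†.graph) :
    Dense (G.domain : Set (WithLp 2 (HA × H₁))) := by
  let V : Submodule ℂ HA := A†.domain.comap (K.subtype ∘ₗ Atil.toLinearMap)
  have hV : Dense (V : Set HA) := by
    rw [Submodule.dense_iff_topologicalClosure_eq_top, Submodule.topologicalClosure_eq_top_iff,
      Submodule.eq_bot_iff]
    intro w hw
    have h0 : ((0 : H₁), (Atil w : H₂)) ∈ A.graph :=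
      mem_graph_of_forall_inner_adjoint hdense hclosed hKA fun f b hfb => by
        rw [inner_zero_right, eq_comm]
        exact Submodule.inner_right_of_mem_orthogonal
          (show f ∈ V from mem_domain_of_mem_graph hfb) hw
    simpa using A.graph_fst_eq_zero_snd h0 rfl
  refine ((hV.prod hdense).preimage (WithLp.homeomorphProd 2 HA H₁).isOpenMap).mono
    fun x hx => ?_
  exact generator_mem_domain hsurj hG hx.1 hx.2

theorem inner_generator_apply_eq_neg (hdense : Dense (A.domain : Set H₁))
    (hKA : ∀ x : A.domain, A x ∈ K) (hAtil : ∀ f : HA, (Atil f : H₂) = A ⟨ι f, hmem f⟩)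
    (hsurj : ∀ x ∈ A.domain, ∃ f : HA, ι f = x)
    (hG : ∀ x y, (x, y) ∈ G.graph ↔ ι y.fst = x.snd ∧ ((Atil x.fst : H₂), -y.snd) ∈ A†.graph)
    (x y : G.domain) :
    ⟪G x, (y : WithLp 2 (HA × H₁))⟫_ℂ = -⟪(x : WithLp 2 (HA × H₁)), G y⟫_ℂ := by
  obtain ⟨hx₁, hx₂⟩ := (hG _ _).1 (G.mem_graph x)
  obtain ⟨hy₁, hy₂⟩ := (hG _ _).1 (G.mem_graph y)
  have h₁ := (mem_graph_adjoint_iff_forall_iota hdense hKA hAtil hsurj).1 hx₂ (G y).fst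
  have h₂ := (mem_graph_adjoint_iff_forall_iota hdense hKA hAtil hsurj).1 hy₂ (G x).fst
  have h₂' := congrArg (starRingEnd ℂ) h₂
  simp only [inner_conj_symm, inner_neg_right] at h₂'
  simp only [WithLp.prod_inner_apply, WithLp.ofLp_fst, WithLp.ofLp_snd, ← hx₁, ← hy₁,
    ← Atil.inner_map_map, Submodule.coe_inner]
  rw [inner_neg_left] at h₁
  linear_combination -h₁ - h₂'

theorem isFormalAdjoint_I_smul_generator (hdense : Dense (A.domain : Set H₁))
    (hKA : ∀ x : A.domain, A x ∈ K) (hAtil : ∀ f : HA, (Atil f : H₂) = A ⟨ι f, hmem f⟩)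
    (hsurj : ∀ x ∈ A.domain, ∃ f : HA, ι f = x)
    (hG : ∀ x y, (x, y) ∈ G.graph ↔ ι y.fst = x.snd ∧ ((Atil x.fst : H₂), -y.snd) ∈ A†.graph) :
    (Complex.I • G).IsFormalAdjoint (Complex.I • G) := fun x y => by
  rw [LinearPMap.smul_apply, LinearPMap.smul_apply, inner_smul_left, inner_smul_right,
    Complex.conj_I, inner_generator_apply_eq_neg hdense hKA hAtil hsurj hG]
  ring

theorem adjoint_I_smul_generator_domain_le [CompleteSpace H₂] [CompleteSpace HA]
    (hdense : Dense (A.domain : Set H₁)) (hclosed : A.IsClosed) (hKA : ∀ x : A.domain, A x ∈ K)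
    (hAtil : ∀ f : HA, (Atil f : H₂) = A ⟨ι f, hmem f⟩)
    (hsurj : ∀ x ∈ A.domain, ∃ f : HA, ι f = x)
    (hG : ∀ x y, (x, y) ∈ G.graph ↔ ι y.fst = x.snd ∧ ((Atil x.fst : H₂), -y.snd) ∈ A†.graph) :
    (Complex.I • G)†.domain ≤ G.domain := by
  intro z hz
  set w := (Complex.I • G)† ⟨z, hz⟩
  have hdense' : Dense ((Complex.I • G).domain : Set (WithLp 2 (HA × H₁))) :=
    dense_generator_domain (G := G) hdense hclosed hKA hsurj hG
  have hT : ∀ u v, (u, v) ∈ G.graph → ⟪w, u⟫_ℂ = ⟪z, Complex.I • v⟫_ℂ := fun u v huv =>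
    (mem_graph_adjoint_iff hdense').1 ((Complex.I • G)†.mem_graph ⟨z, hz⟩) u _
      ((mem_graph_smul_iff Complex.I_ne_zero).2 (by rwa [inv_smul_smul₀ Complex.I_ne_zero]))
  have h₁ : ((-Complex.I) • (Atil z.fst : H₂), w.snd) ∈ A†.graph := by
    rw [mem_graph_adjoint_iff_forall_iota hdense hKA hAtil hsurj]
    intro g
    have := hT (WithLp.toLp 2 (0, ι g)) (WithLp.toLp 2 (g, 0)) ((hG _ _).2 ⟨rfl, by simp⟩)
    simp only [WithLp.prod_inner_apply, WithLp.ofLp_fst, WithLp.ofLp_snd, inner_zero_right,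
      zero_add, add_zero, inner_smul_right] at this
    rw [this, inner_smul_left, ← Submodule.coe_inner, Atil.inner_map_map]
    simp
  have h₂ : (Complex.I • z.snd, (Atil w.fst : H₂)) ∈ A.graph := by
    refine mem_graph_of_forall_inner_adjoint hdense hclosed hKA fun f b hfb => ?_
    have := hT (WithLp.toLp 2 (f, 0)) (WithLp.toLp 2 (0, -b))
      ((hG _ _).2 ⟨by simp, by simpa using hfb⟩)
    simp only [WithLp.prod_inner_apply, WithLp.ofLp_fst, WithLp.ofLp_snd, inner_zero_right,
      add_zero, zero_add, inner_smul_right, inner_neg_right] at this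
    rw [inner_smul_right, ← inner_conj_symm f, this, _root_.map_mul, _root_.map_neg,
      Complex.conj_I, inner_conj_symm]
    ring
  refine generator_mem_domain hsurj hG ?_ ?_
  · exact (Submodule.smul_mem_iff _ (neg_ne_zero.2 Complex.I_ne_zero)).1
      (mem_domain_of_mem_graph h₁)
  · exact (Submodule.smul_mem_iff _ Complex.I_ne_zero).1 (mem_domain_of_mem_graph h₂)

theorem adjoint_I_smul_generator [CompleteSpace H₂] [CompleteSpace HA]
    (hdense : Dense (A.domain : Set H₁)) (hclosed : A.IsClosed) (hKA : ∀ x : A.domain, A x ∈ K)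
    (hAtil : ∀ f : HA, (Atil f : H₂) = A ⟨ι f, hmem f⟩)
    (hsurj : ∀ x ∈ A.domain, ∃ f : HA, ι f = x)
    (hG : ∀ x y, (x, y) ∈ G.graph ↔ ι y.fst = x.snd ∧ ((Atil x.fst : H₂), -y.snd) ∈ A†.graph) :
    (Complex.I • G)† = Complex.I • G :=
  (isFormalAdjoint_I_smul_generator hdense hKA hAtil hsurj hG).adjoint_eq_self
    (dense_generator_domain (G := G) hdense hclosed hKA hsurj hG)
    (adjoint_I_smul_generator_domain_le hdense hclosed hKA hAtil hsurj hG)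

end Generator

section Dirac

variable {H₁ H₂ : Type*} [NormedAddCommGroup H₁] [InnerProductSpace ℂ H₁] [CompleteSpace H₁]
  [NormedAddCommGroup H₂] [InnerProductSpace ℂ H₂] {A : H₁ →ₗ.[ℂ] H₂} {P : H₂ →L[ℂ] H₂}

theorem mem_graph_adjoint_sub_apply (hPran : ∀ x : H₂, (P x, (0 : H₁)) ∈ A†.graph) {v : H₂}
    (hv : v - P v ∈ A†.domain) : (v, A† ⟨v - P v, hv⟩) ∈ A†.graph := by
  simpa using add_mem (A†.mem_graph ⟨_, hv⟩) (hPran v)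

theorem mem_graph_dirac_iff {K : Submodule ℂ H₂} (hKA : ∀ x : A.domain, A x ∈ K)
    {D : WithLp 2 (H₁ × K) →ₗ.[ℂ] WithLp 2 (H₁ × K)}
    (hPran : ∀ x : H₂, (P x, (0 : H₁)) ∈ A†.graph)
    (hDdom : ∀ y : WithLp 2 (H₁ × K), y ∈ D.domain ↔
      (y.fst ∈ A.domain ∧ ((y.snd : H₂) ∈ A.adjoint.domain)))
    (hDval : ∀ (y : D.domain)
      (h1 : (y : WithLp 2 (H₁ × K)).fst ∈ A.domain)
      (h2 : ((y : WithLp 2 (H₁ × K)).snd : H₂) -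
        P ((y : WithLp 2 (H₁ × K)).snd : H₂) ∈ A.adjoint.domain),
      D y = (WithLp.equiv 2 (H₁ × K)).symm
        (A.adjoint ⟨((y : WithLp 2 (H₁ × K)).snd : H₂) -
            P ((y : WithLp 2 (H₁ × K)).snd : H₂), h2⟩,
          ⟨A ⟨(y : WithLp 2 (H₁ × K)).fst, h1⟩, hKA _⟩))
    (u w : WithLp 2 (H₁ × K)) :
    (u, w) ∈ D.graph ↔ (u.fst, (w.snd : H₂)) ∈ A.graph ∧ ((u.snd : H₂), w.fst) ∈ A†.graph := by
  have hPdom : ∀ v, P v ∈ A†.domain := fun v => mem_domain_of_mem_graph (hPran v)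
  constructor
  · intro h
    obtain ⟨u, rfl, rfl⟩ := D.mem_graph_iff.mp h
    obtain ⟨h₁, h₂⟩ := (hDdom u).1 u.2
    rw [hDval u h₁ (sub_mem h₂ (hPdom _))]
    exact ⟨A.mem_graph ⟨_, h₁⟩, mem_graph_adjoint_sub_apply hPran _⟩
  · rintro ⟨h₁, h₂⟩
    have hu : u ∈ D.domain :=
      (hDdom u).2 ⟨mem_domain_of_mem_graph h₁, mem_domain_of_mem_graph h₂⟩
    have h₂' := sub_mem (mem_domain_of_mem_graph h₂) (hPdom u.snd)
    rw [← image_iff hu, hDval ⟨u, hu⟩ (mem_domain_of_mem_graph h₁) h₂', WithLp.ext_iff]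
    refine Prod.ext ?_ (Subtype.ext ?_)
    · exact A†.mem_graph_snd_inj h₂ (mem_graph_adjoint_sub_apply hPran h₂') rfl
    · exact A.mem_graph_snd_inj h₁ (A.mem_graph _) rfl

end Dirac

theorem iG_selfAdjoint_and_unitarily_equivalent_to_Dirac_general
    {H₁ H₂ HA : Type*}
    [NormedAddCommGroup H₁] [InnerProductSpace ℂ H₁] [CompleteSpace H₁]
    [NormedAddCommGroup H₂] [InnerProductSpace ℂ H₂] [CompleteSpace H₂]
    [NormedAddCommGroup HA] [InnerProductSpace ℂ HA] [CompleteSpace HA]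
    (A : H₁ →ₗ.[ℂ] H₂)
    (hdense : Dense (A.domain : Set H₁))
    (hclosed : A.IsClosed)
    -- `ι = ι_A : HA → H₁`, a linear bijection from `HA` onto `dom(A)`:
    (ι : HA →ₗ[ℂ] H₁)
    (hmem : ∀ f : HA, ι f ∈ A.domain)
    (hsurj : ∀ x ∈ A.domain, ∃ f : HA, ι f = x)
    -- `K = K_A = ran(A)`, a closed subspace of `H₂`:
    (K : Submodule ℂ H₂)
    (hKA : ∀ x : A.domain, A x ∈ K)
    -- `Ã : HA → K`, the unitary operator `f ↦ A f`:
    (Atil : HA ≃ₗᵢ[ℂ] K)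
    (hAtil : ∀ f : HA, (Atil f : H₂) = A ⟨ι f, hmem f⟩)
    -- `P = P_{ker(A*)}`, the orthogonal projection of `H₂` onto `ker(A*)`:
    (P : H₂ →L[ℂ] H₂)
    (hPran : ∀ x : H₂, (P x, (0 : H₁)) ∈ A.adjoint.graph)
    -- `U = [[0, I],[−iÃ, 0]] : HA ⊕ H₁ → H₁ ⊕ K`, a unitary operator:
    (U : WithLp 2 (HA × H₁) ≃ₗᵢ[ℂ] WithLp 2 (H₁ × ↥K))
    (hU : ∀ x : WithLp 2 (HA × H₁),
      U x = (WithLp.equiv 2 (H₁ × ↥K)).symm (x.snd, (-Complex.I) • Atil x.fst))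
    -- `G = G_{A,0} : (f,g) ↦ (g, −A*(Af))` with domain `dom(A*A) ⊕ dom(A)` in `HA ⊕ H₁`:
    (G : WithLp 2 (HA × H₁) →ₗ.[ℂ] WithLp 2 (HA × H₁))
    (hGdom : ∀ x : WithLp 2 (HA × H₁), x ∈ G.domain ↔
      (A ⟨ι x.fst, hmem x.fst⟩ ∈ A.adjoint.domain ∧ x.snd ∈ A.domain))
    (hGval : ∀ (x : G.domain)
      (hf : A ⟨ι (x : WithLp 2 (HA × H₁)).fst, hmem (x : WithLp 2 (HA × H₁)).fst⟩ ∈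
        A.adjoint.domain)
      (g' : HA) (hg' : ι g' = (x : WithLp 2 (HA × H₁)).snd),
      G x = (WithLp.equiv 2 (HA × H₁)).symm
        (g', -(A.adjoint ⟨A ⟨ι (x : WithLp 2 (HA × H₁)).fst,
          hmem (x : WithLp 2 (HA × H₁)).fst⟩, hf⟩)))
    -- `D = [[0, A*(1−P)],[A, 0]]` with domain `dom(A) ⊕ {g ∈ dom(A*) : g ∈ K}` in `H₁ ⊕ K`:
    (D : WithLp 2 (H₁ × ↥K) →ₗ.[ℂ] WithLp 2 (H₁ × ↥K))
    (hDdom : ∀ y : WithLp 2 (H₁ × ↥K), y ∈ D.domain ↔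
      (y.fst ∈ A.domain ∧ ((y.snd : H₂) ∈ A.adjoint.domain)))
    (hDval : ∀ (y : D.domain)
      (h1 : (y : WithLp 2 (H₁ × ↥K)).fst ∈ A.domain)
      (h2 : ((y : WithLp 2 (H₁ × ↥K)).snd : H₂) -
        P ((y : WithLp 2 (H₁ × ↥K)).snd : H₂) ∈ A.adjoint.domain),
      D y = (WithLp.equiv 2 (H₁ × ↥K)).symm
        (A.adjoint ⟨((y : WithLp 2 (H₁ × ↥K)).snd : H₂) -
            P ((y : WithLp 2 (H₁ × ↥K)).snd : H₂), h2⟩,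
          ⟨A ⟨(y : WithLp 2 (H₁ × ↥K)).fst, h1⟩, hKA _⟩)) :
    -- `i G_{A,0}` is self-adjoint and `U (i G_{A,0}) U⁻¹ = D`:
    (Complex.I • G).adjoint = Complex.I • G ∧
      ∀ x y : WithLp 2 (HA × H₁),
        ((x, y) ∈ (Complex.I • G).graph ↔ (U x, U y) ∈ D.graph) := by
  have hG := mem_graph_generator_iff hAtil hsurj hGdom hGval
  refine ⟨adjoint_I_smul_generator hdense hclosed hKA hAtil hsurj hG, fun x y => ?_⟩
  rw [mem_graph_smul_iff Complex.I_ne_zero, hG, mem_graph_dirac_iff hKA hPran hDdom hDval, hU, hU]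
  simp only [WithLp.equiv_symm_apply, WithLp.toLp_fst, WithLp.toLp_snd, Complex.inv_I]
  refine and_congr ?_ ?_
  · rw [← Atil.map_smul, mk_coe_mem_graph_iff hAtil hsurj]
    rfl
  · rw [← Submodule.smul_mem_iff _ (neg_ne_zero.2 Complex.I_ne_zero)]
    simp [smul_smul]

/-- Theorem 2.8. Let `A : dom(A) ⊆ H₁ → H₂` be densely defined, closed with
`A*A ≥ ε I`, `ε > 0`.  Let `HA` be the Hilbert space `dom(A)` with inner product
`(f,g)_A = ⟪Af, Ag⟫` (realized via the bijection `ι : HA → dom(A)`), `K = ran(A)` (a closed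
subspace of `H₂`), `Ã : HA → K` the unitary `f ↦ Af`, `P` the orthogonal projection of `H₂`
onto `ker(A*)`, `U = [[0, 1],[−iÃ, 0]] : HA ⊕ H₁ → H₁ ⊕ K` the unitary operator, `G = G_{A,0}`
the generator `(f,g) ↦ (g, −A*(Af))` with domain `dom(A*A) ⊕ dom(A)`, and `D` the Dirac-type
operator `[[0, A*(1−P)],[A,0]]` with domain `dom(A) ⊕ {g ∈ dom(A*) : g ∈ K}`.
Then `i G` is self-adjoint in `HA ⊕ H₁` and `U (i G) U⁻¹ = D`. -/
theorem iG_selfAdjoint_and_unitarily_equivalent_to_Dirac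
    {H₁ H₂ HA : Type*}
    [NormedAddCommGroup H₁] [InnerProductSpace ℂ H₁] [CompleteSpace H₁]
    [TopologicalSpace.SeparableSpace H₁]
    [NormedAddCommGroup H₂] [InnerProductSpace ℂ H₂] [CompleteSpace H₂]
    [TopologicalSpace.SeparableSpace H₂]
    [NormedAddCommGroup HA] [InnerProductSpace ℂ HA] [CompleteSpace HA]
    (A : H₁ →ₗ.[ℂ] H₂)
    (hdense : Dense (A.domain : Set H₁))
    (hclosed : A.IsClosed)
    (ε : ℝ) (hε : 0 < ε)
    (hcoercive : ∀ f : A.domain, ε * ‖(f : H₁)‖ ^ 2 ≤ ‖A f‖ ^ 2)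
    -- `ι = ι_A : HA → H₁`, a linear bijection from `HA` onto `dom(A)`:
    (ι : HA →ₗ[ℂ] H₁)
    (hmem : ∀ f : HA, ι f ∈ A.domain)
    (hsurj : ∀ x ∈ A.domain, ∃ f : HA, ι f = x)
    (hinj : Function.Injective ι)
    (hinner : ∀ f g : HA, ⟪f, g⟫_ℂ = ⟪A ⟨ι f, hmem f⟩, A ⟨ι g, hmem g⟩⟫_ℂ)
    -- `K = K_A = ran(A)`, a closed subspace of `H₂`:
    (K : Submodule ℂ H₂)
    (hK : K = LinearMap.range A.toFun)
    (hKclosed : IsClosed (K : Set H₂))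
    (hKA : ∀ x : A.domain, A x ∈ K)
    -- `Ã : HA → K`, the unitary operator `f ↦ A f`:
    (Atil : HA ≃ₗᵢ[ℂ] K)
    (hAtil : ∀ f : HA, (Atil f : H₂) = A ⟨ι f, hmem f⟩)
    -- `P = P_{ker(A*)}`, the orthogonal projection of `H₂` onto `ker(A*)`:
    (P : H₂ →L[ℂ] H₂)
    (hPran : ∀ x : H₂, (P x, (0 : H₁)) ∈ A.adjoint.graph)
    (hPfix : ∀ x : H₂, (x, (0 : H₁)) ∈ A.adjoint.graph → P x = x)
    (hPorth : ∀ x y : H₂, (y, (0 : H₁)) ∈ A.adjoint.graph → ⟪x - P x, y⟫_ℂ = 0)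
    -- `U = [[0, I],[−iÃ, 0]] : HA ⊕ H₁ → H₁ ⊕ K`, a unitary operator:
    (U : WithLp 2 (HA × H₁) ≃ₗᵢ[ℂ] WithLp 2 (H₁ × ↥K))
    (hU : ∀ x : WithLp 2 (HA × H₁),
      U x = (WithLp.equiv 2 (H₁ × ↥K)).symm (x.snd, (-Complex.I) • Atil x.fst))
    -- `G = G_{A,0} : (f,g) ↦ (g, −A*(Af))` with domain `dom(A*A) ⊕ dom(A)` in `HA ⊕ H₁`:
    (G : WithLp 2 (HA × H₁) →ₗ.[ℂ] WithLp 2 (HA × H₁))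
    (hGdom : ∀ x : WithLp 2 (HA × H₁), x ∈ G.domain ↔
      (A ⟨ι x.fst, hmem x.fst⟩ ∈ A.adjoint.domain ∧ x.snd ∈ A.domain))
    (hGval : ∀ (x : G.domain)
      (hf : A ⟨ι (x : WithLp 2 (HA × H₁)).fst, hmem (x : WithLp 2 (HA × H₁)).fst⟩ ∈
        A.adjoint.domain)
      (g' : HA) (hg' : ι g' = (x : WithLp 2 (HA × H₁)).snd),
      G x = (WithLp.equiv 2 (HA × H₁)).symm
        (g', -(A.adjoint ⟨A ⟨ι (x : WithLp 2 (HA × H₁)).fst,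
          hmem (x : WithLp 2 (HA × H₁)).fst⟩, hf⟩)))
    -- `D = [[0, A*(1−P)],[A, 0]]` with domain `dom(A) ⊕ {g ∈ dom(A*) : g ∈ K}` in `H₁ ⊕ K`:
    (D : WithLp 2 (H₁ × ↥K) →ₗ.[ℂ] WithLp 2 (H₁ × ↥K))
    (hDdom : ∀ y : WithLp 2 (H₁ × ↥K), y ∈ D.domain ↔
      (y.fst ∈ A.domain ∧ ((y.snd : H₂) ∈ A.adjoint.domain)))
    (hDval : ∀ (y : D.domain)
      (h1 : (y : WithLp 2 (H₁ × ↥K)).fst ∈ A.domain)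
      (h2 : ((y : WithLp 2 (H₁ × ↥K)).snd : H₂) -
        P ((y : WithLp 2 (H₁ × ↥K)).snd : H₂) ∈ A.adjoint.domain),
      D y = (WithLp.equiv 2 (H₁ × ↥K)).symm
        (A.adjoint ⟨((y : WithLp 2 (H₁ × ↥K)).snd : H₂) -
            P ((y : WithLp 2 (H₁ × ↥K)).snd : H₂), h2⟩,
          ⟨A ⟨(y : WithLp 2 (H₁ × ↥K)).fst, h1⟩, hKA _⟩)) :
    -- `i G_{A,0}` is self-adjoint and `U (i G_{A,0}) U⁻¹ = D`:
    (Complex.I • G).adjoint = Complex.I • G ∧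
      ∀ x y : WithLp 2 (HA × H₁),
        ((x, y) ∈ (Complex.I • G).graph ↔ (U x, U y) ∈ D.graph) :=
  iG_selfAdjoint_and_unitarily_equivalent_to_Dirac_general A hdense hclosed ι hmem hsurj K hKA Atil
    hAtil P hPran U hU G hGdom hGval D hDdom hDval
end

section
/- Let S be a self-adjoint operator in the complex separable Hilbert space H with ker(S) = {0}. Then dom(S) ∩ ran(S) = dom(S) ∩ dom(S^{-1}) is dense in H and is a core for both S and S^{-1}, i.e., the closures of the restrictions of S and of S^{-1} to dom(S) ∩ ran(S) equal S and S^{-1}, respectively. -/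
/-!
For self-adjoint `S` the graph of `S` and the rotated graph `{(S y, -y)}` are orthogonal
complements in `H ⊕ H`, so every `u` can be written as `u = x + S (S x)`. If `f ∈ dom S` is
orthogonal to `D = dom S ∩ ran S` for the graph inner product, testing against `S x ∈ D` gives
`⟪u, S f⟫ = 0` for every `u`, hence `S f = 0` and `f = 0`: `D` is a core for `S`, dense since
`dom S` is. In particular `ran S` is dense, so `S⁻¹` is again self-adjoint with trivial kernel,
and `dom S⁻¹ ∩ ran S⁻¹ = D` is a core for it by the same argument.
-/

open scoped InnerProductSpace

namespace Submodule

variable {𝕜 E F : Type*} [RCLike 𝕜] [NormedAddCommGroup E] [InnerProductSpace 𝕜 E]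
  [NormedAddCommGroup F] [InnerProductSpace 𝕜 F]

theorem adjoint_map_prodComm (g : Submodule 𝕜 (E × F)) :
    (g.map (LinearEquiv.prodComm 𝕜 E F : E × F →ₗ[𝕜] F × E)).adjoint =
      g.adjoint.map (LinearEquiv.prodComm 𝕜 F E : F × E →ₗ[𝕜] E × F) := by
  ext ⟨x, y⟩
  simp only [mem_adjoint_iff, mem_map, LinearEquiv.coe_coe,
    LinearEquiv.prodComm_apply, Prod.exists, Prod.swap_prod_mk, Prod.mk.injEq]
  constructor
  · intro h
    refine ⟨y, x, fun a b hab => ?_, rfl, rfl⟩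
    rw [← neg_eq_zero, neg_sub]
    exact h b a ⟨a, b, hab, rfl, rfl⟩
  · rintro ⟨_, _, h, rfl, rfl⟩ _ _ ⟨a, b, hab, rfl, rfl⟩
    rw [← neg_eq_zero, neg_sub]
    exact h a b hab

end Submodule

namespace LinearPMap

section Algebraic

variable {R E F : Type*} [Ring R] [AddCommGroup E] [AddCommGroup F] [Module R E] [Module R F]

theorem mem_graph_domRestrict {f : E →ₗ.[R] F} {S : Submodule R E} {x : E} {y : F}
    (hxy : (x, y) ∈ f.graph) (hx : x ∈ S) : (x, y) ∈ (f.domRestrict S).graph := by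
  obtain ⟨z, rfl, rfl⟩ := f.mem_graph_iff.1 hxy
  exact (f.domRestrict S).mem_graph_iff.2 ⟨⟨z, hx, z.2⟩, rfl, domRestrict_apply rfl⟩

theorem ker_inverse_eq_bot {f : E →ₗ.[R] F} (hf : LinearMap.ker f.toFun = ⊥) :
    LinearMap.ker f.inverse.toFun = ⊥ := by
  refine LinearMap.ker_eq_bot'.2 fun y hy => Subtype.ext ?_
  have hmem := f.inverse.mem_graph y
  rw [inverse_graph hf] at hmem
  obtain ⟨⟨a, b⟩, hab, hba⟩ := hmem
  simp only [LinearEquiv.coe_coe, LinearEquiv.prodComm_apply, Prod.swap_prod_mk,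
    Prod.mk.injEq] at hba
  rw [← hba.1]
  exact f.graph_fst_eq_zero_snd hab (hba.2.trans (by simpa using hy))

end Algebraic

section Topological

variable {R E F : Type*} [CommRing R] [AddCommGroup E] [AddCommGroup F] [Module R E] [Module R F]
  [TopologicalSpace E] [TopologicalSpace F] [ContinuousAdd E] [ContinuousAdd F]
  [TopologicalSpace R] [ContinuousSMul R E] [ContinuousSMul R F]

theorem closure_domain_subset (f : E →ₗ.[R] F) :
    (f.closure.domain : Set E) ⊆ _root_.closure f.domain := by
  by_cases hf : f.IsClosable
  · intro x hx
    have hgraph : (x, f.closure ⟨x, hx⟩) ∈ _root_.closure (f.graph : Set (E × F)) := by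
      rw [← Submodule.topologicalClosure_coe, hf.graph_closure_eq_closure_graph]
      exact f.closure.mem_graph ⟨x, hx⟩
    rw [← f.graph_map_fst_eq_domain, Submodule.map_coe]
    exact image_closure_subset_closure_image continuous_fst ⟨_, hgraph, rfl⟩
  · rw [closure_def' hf]
    exact subset_closure

theorem HasCore.dense {f : E →ₗ.[R] F} {S : Submodule R E} (h : f.HasCore S)
    (hf : Dense (f.domain : Set E)) : Dense (S : Set E) := by
  have hsub : (f.domain : Set E) ⊆ _root_.closure S := by
    conv_lhs => rw [← h.closure_eq]
    refine (closure_domain_subset _).trans (closure_mono ?_)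
    rw [domRestrict_domain]
    exact inf_le_left
  exact dense_closure.1 (hf.mono hsub)

end Topological

variable {𝕜 E F : Type*} [RCLike 𝕜] [NormedAddCommGroup E] [InnerProductSpace 𝕜 E]
  [NormedAddCommGroup F] [InnerProductSpace 𝕜 F]

theorem hasCore_of_graph_orthogonal [CompleteSpace E] [CompleteSpace F] {T : E →ₗ.[𝕜] F}
    (hT : T.IsClosed) {D : Submodule 𝕜 E} (hD : D ≤ T.domain)
    (h : ∀ f v, (f, v) ∈ T.graph →
      (∀ g w, (g, w) ∈ T.graph → g ∈ D → ⟪g, f⟫_𝕜 + ⟪w, v⟫_𝕜 = 0) → f = 0) :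
    T.HasCore D := by
  refine ⟨hD, eq_of_eq_graph ?_⟩
  set R := T.domRestrict D
  have hR : R.IsClosable := hT.isClosable.leIsClosable domRestrict_le
  let e := WithLp.linearEquiv 2 𝕜 (E × F)
  let W := R.graph.topologicalClosure.comap e.toLinearMap
  have : W.HasOrthogonalProjection := by
    have hW : _root_.IsClosed (W : Set (WithLp 2 (E × F))) :=
      R.graph.isClosed_topologicalClosure.preimage (WithLp.prod_continuous_ofLp 2 E F)
    have := hW.completeSpace_coe
    infer_instance
  have hWG : W ≤ T.graph.comap e.toLinearMap := Submodule.comap_mono <|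
    Submodule.topologicalClosure_minimal _ (le_graph_of_le domRestrict_le) hT
  have hperp : Wᗮ ⊓ T.graph.comap e.toLinearMap = ⊥ := by
    refine (Submodule.eq_bot_iff _).2 fun z ⟨hzW, hzG⟩ => ?_
    have hfst : z.ofLp.1 = 0 := h _ _ hzG fun g w hgw hg => by
      have hmem : WithLp.toLp 2 (g, w) ∈ W :=
        R.graph.le_topologicalClosure (mem_graph_domRestrict hgw hg)
      simpa using (Submodule.mem_orthogonal _ _).1 hzW _ hmem
    have hsnd : z.ofLp.2 = 0 := T.graph_fst_eq_zero_snd hzG hfst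
    exact (WithLp.ofLp_eq_zero 2).1 (Prod.ext hfst hsnd)
  rw [← hR.graph_closure_eq_closure_graph]
  refine Submodule.comap_injective_of_surjective e.surjective ?_
  rw [← Submodule.sup_orthogonal_inf_of_hasOrthogonalProjection hWG, hperp, sup_bot_eq]

theorem adjoint_inverse [CompleteSpace E] [CompleteSpace F] {T : E →ₗ.[𝕜] F}
    (hT : Dense (T.domain : Set E)) (hT' : Dense (T.inverse.domain : Set F))
    (hker : LinearMap.ker T.toFun = ⊥) (hker' : LinearMap.ker T.adjoint.toFun = ⊥) :
    T.inverse.adjoint = T.adjoint.inverse := by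
  apply eq_of_eq_graph
  rw [adjoint_graph_eq_graph_adjoint hT', inverse_graph hker, inverse_graph hker',
    Submodule.adjoint_map_prodComm, adjoint_graph_eq_graph_adjoint hT]

section SelfAdjoint

variable [CompleteSpace E] {A : E →ₗ.[𝕜] E}

theorem _root_.IsSelfAdjoint.graph_adjoint (hA : IsSelfAdjoint A) : A.graph.adjoint = A.graph := by
  rw [← adjoint_graph_eq_graph_adjoint hA.dense_domain, isSelfAdjoint_def.1 hA]

theorem _root_.IsSelfAdjoint.inner_eq_of_mem_graph (hA : IsSelfAdjoint A) {x y f v : E}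
    (hxy : (x, y) ∈ A.graph) (hfv : (f, v) ∈ A.graph) : ⟪y, f⟫_𝕜 = ⟪x, v⟫_𝕜 := by
  rw [← hA.graph_adjoint, Submodule.mem_adjoint_iff] at hfv
  exact sub_eq_zero.1 (hfv x y hxy)

theorem _root_.IsSelfAdjoint.exists_mem_graph_add (hA : IsSelfAdjoint A) (u : E) :
    ∃ x y, (x, y) ∈ A.graph ∧ (y, u - x) ∈ A.graph := by
  -- decompose `(u, 0)` along the graph and its orthogonal complement, the rotated graph
  let G := A.graph.comap (WithLp.linearEquiv 2 𝕜 (E × E)).toLinearMap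
  have : G.HasOrthogonalProjection := by
    have hG : _root_.IsClosed (G : Set (WithLp 2 (E × E))) :=
      (show _root_.IsClosed (A.graph : Set (E × E)) from hA.isClosed).preimage
        (WithLp.prod_continuous_ofLp 2 E E)
    have := hG.completeSpace_coe
    infer_instance
  obtain ⟨p, hp, z, hz, hsum⟩ := G.exists_add_mem_mem_orthogonal (WithLp.toLp 2 (u, 0))
  have hzu : z.ofLp.1 = u - p.ofLp.1 ∧ z.ofLp.2 = -p.ofLp.2 := by
    have h := congrArg WithLp.ofLp hsum
    simp only [WithLp.ofLp_add, Prod.ext_iff, Prod.fst_add, Prod.snd_add] at h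
    exact ⟨by rw [h.1]; abel, by rw [eq_neg_iff_add_eq_zero, add_comm, ← h.2]⟩
  have hrot : (-z.ofLp.2, z.ofLp.1) ∈ A.graph := by
    rw [← hA.graph_adjoint, Submodule.mem_adjoint_iff]
    intro c d hcd
    have hperp := (Submodule.mem_orthogonal _ _).1 hz (WithLp.toLp 2 (c, d)) hcd
    simp only [WithLp.prod_inner_apply] at hperp
    rw [inner_neg_right]
    linear_combination -hperp
  rw [hzu.1, hzu.2, neg_neg] at hrot
  exact ⟨_, _, hp, hrot⟩

theorem _root_.IsSelfAdjoint.hasCore_domain_inf_range (hA : IsSelfAdjoint A)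
    (hker : LinearMap.ker A.toFun = ⊥) : A.HasCore (A.domain ⊓ LinearMap.range A.toFun) := by
  refine hasCore_of_graph_orthogonal hA.isClosed inf_le_left fun f v hfv horth => ?_
  have hv : v = 0 := by
    refine ext_inner_left 𝕜 fun u => ?_
    obtain ⟨x, y, hxy, hyu⟩ := hA.exists_mem_graph_add u
    obtain ⟨x', -, rfl⟩ := A.mem_graph_iff.1 hxy
    have := horth _ (u - x) hyu ⟨mem_domain_of_mem_graph hyu, x', rfl⟩
    rw [hA.inner_eq_of_mem_graph hxy hfv, inner_sub_left] at this
    rw [inner_zero_right]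
    linear_combination this
  obtain ⟨f', rfl, hf'⟩ := A.mem_graph_iff.1 (hv ▸ hfv)
  exact congrArg Subtype.val (LinearMap.ker_eq_bot'.1 hker f' hf')

theorem _root_.IsSelfAdjoint.dense_range (hA : IsSelfAdjoint A)
    (hker : LinearMap.ker A.toFun = ⊥) : Dense (LinearMap.range A.toFun : Set E) :=
  ((hA.hasCore_domain_inf_range hker).dense hA.dense_domain).mono inf_le_right

theorem _root_.IsSelfAdjoint.inverse (hA : IsSelfAdjoint A) (hker : LinearMap.ker A.toFun = ⊥) :
    IsSelfAdjoint A.inverse := by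
  have hker' : LinearMap.ker A.adjoint.toFun = ⊥ := by rwa [isSelfAdjoint_def.1 hA]
  rw [isSelfAdjoint_def, adjoint_inverse hA.dense_domain
    (by rw [inverse_domain]; exact hA.dense_range hker)
    hker hker', isSelfAdjoint_def.1 hA]

end SelfAdjoint

end LinearPMap

theorem dom_inter_ran_dense_and_core_general
    {H : Type*}
    [NormedAddCommGroup H] [InnerProductSpace ℂ H] [CompleteSpace H]
    (S : H →ₗ.[ℂ] H)
    (hsa : S.adjoint = S)
    (hker : ∀ f : S.domain, S f = 0 → (f : H) = 0) :
    Dense (((S.domain ⊓ LinearMap.range S.toFun : Submodule ℂ H)) : Set H) ∧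
    S.domain ⊓ LinearMap.range S.toFun = S.domain ⊓ S.inverse.domain ∧
    (S.domRestrict (S.domain ⊓ LinearMap.range S.toFun)).closure = S ∧
    (S.inverse.domRestrict (S.domain ⊓ LinearMap.range S.toFun)).closure = S.inverse := by
  have hA : IsSelfAdjoint S := hsa
  have hker' : LinearMap.ker S.toFun = ⊥ :=
    LinearMap.ker_eq_bot'.2 fun f hf => Subtype.ext (hker f hf)
  have hcore := hA.hasCore_domain_inf_range hker'
  have hcoreInv := (hA.inverse hker').hasCore_domain_inf_range (LinearPMap.ker_inverse_eq_bot hker')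
  rw [LinearPMap.inverse_range hker', LinearPMap.inverse_domain, inf_comm] at hcoreInv
  exact ⟨hcore.dense hA.dense_domain, by rw [LinearPMap.inverse_domain], hcore.closure_eq,
    hcoreInv.closure_eq⟩

/-- Lemma 3.6. Let `S` be a self-adjoint operator in the complex separable
Hilbert space `H` with `ker(S) = {0}`.  Then `dom(S) ∩ ran(S) = dom(S) ∩ dom(S⁻¹)` is dense in
`H` and is a core for both `S` and `S⁻¹`. -/
theorem dom_inter_ran_dense_and_core
    {H : Type*}
    [NormedAddCommGroup H] [InnerProductSpace ℂ H] [CompleteSpace H]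
    [TopologicalSpace.SeparableSpace H]
    (S : H →ₗ.[ℂ] H)
    (hdense : Dense (S.domain : Set H))
    (hsa : S.adjoint = S)
    (hker : ∀ f : S.domain, S f = 0 → (f : H) = 0) :
    Dense (((S.domain ⊓ LinearMap.range S.toFun : Submodule ℂ H)) : Set H) ∧
    S.domain ⊓ LinearMap.range S.toFun = S.domain ⊓ S.inverse.domain ∧
    (S.domRestrict (S.domain ⊓ LinearMap.range S.toFun)).closure = S ∧
    (S.inverse.domRestrict (S.domain ⊓ LinearMap.range S.toFun)).closure = S.inverse :=
  dom_inter_ran_dense_and_core_general S hsa hker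
end

section
/- Assume ker(A) = {0} and ker(A*) = {0}. Then dom(A*) ∩ ran(A) is dense in H₂ and is a core for A*, i.e., the closure of the restriction of A* to dom(A*) ∩ ran(A) equals A*. -/
/-!
Decomposing `(u, 0)` along the closed graph of `A` in `H₁ ⊕ H₂` and its orthogonal complement
`{(-A* z, z)}` writes every `u` as `f + A* A f` with `A f ∈ dom A*` (von Neumann). So if `y ∈ dom A*`
is graph-orthogonal to every `(A f, A* A f)`, then `⟪u, A* y⟫ = ⟪f + A* A f, A* y⟫ = 0` for every `u`, so
`A* y = 0` and `y = 0`: `dom A* ∩ ran A` is a core for `A*`. A core is dense in `dom A*`, and `dom A*`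
is dense because `A` is closed: `g ⊥ dom A*` puts `(0, g)` in `graph(A)ᗮᗮ = graph(A)`.
-/

open scoped InnerProductSpace
open LinearPMap WithLp

namespace Submodule

variable {𝕜 E : Type*} [RCLike 𝕜] [NormedAddCommGroup E] [InnerProductSpace 𝕜 E] [CompleteSpace E]

theorem le_topologicalClosure_of_orthogonal {K W : Submodule 𝕜 E} (hKW : K ≤ W)
    (hW : IsClosed (W : Set E)) (h : ∀ w ∈ W, w ∈ Kᗮ → w = 0) : W ≤ K.topologicalClosure := by
  intro w hw
  have : CompleteSpace K.topologicalClosure := K.isClosed_topologicalClosure.completeSpace_coe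
  obtain ⟨p, hp, q, hq, rfl⟩ := K.topologicalClosure.exists_add_mem_mem_orthogonal w
  have hqW : q ∈ W := by
    simpa using W.sub_mem hw (K.topologicalClosure_minimal hKW hW hp)
  rwa [h q hqW (orthogonal_le K.le_topologicalClosure hq), add_zero]

end Submodule

namespace LinearPMap

theorem closure_domain_subset_closure {R E F : Type*} [CommRing R] [AddCommGroup E]
    [AddCommGroup F] [Module R E] [Module R F] [TopologicalSpace E] [TopologicalSpace F]
    [ContinuousAdd E] [ContinuousAdd F] [TopologicalSpace R] [ContinuousSMul R E]
    [ContinuousSMul R F] (f : E →ₗ.[R] F) :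
    (f.closure.domain : Set E) ⊆ _root_.closure f.domain := by
  by_cases hf : f.IsClosable
  · intro x hx
    have hgraph : ((x, f.closure ⟨x, hx⟩) : E × F) ∈ _root_.closure (f.graph : Set (E × F)) := by
      rw [← Submodule.topologicalClosure_coe, SetLike.mem_coe, hf.graph_closure_eq_closure_graph]
      exact f.closure.mem_graph ⟨x, hx⟩
    refine map_mem_closure continuous_fst hgraph fun p hp ↦ ?_
    obtain ⟨y, hy, -⟩ := f.mem_graph_iff.mp hp
    exact hy ▸ y.2
  · rw [closure_def' hf]
    exact subset_closure

variable {𝕜 E F : Type*} [RCLike 𝕜] [NormedAddCommGroup E] [InnerProductSpace 𝕜 E]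
  [NormedAddCommGroup F] [InnerProductSpace 𝕜 F]

/-- `T.graph` inside `WithLp 2 (E × F)`, where it carries the graph inner product. -/
def graphL2 (T : E →ₗ.[𝕜] F) : Submodule 𝕜 (WithLp 2 (E × F)) :=
  T.graph.comap (WithLp.linearEquiv 2 𝕜 (E × F)).toLinearMap

theorem toLp_mem_graphL2 (T : E →ₗ.[𝕜] F) (x : T.domain) : toLp 2 ((x : E), T x) ∈ T.graphL2 :=
  T.mem_graph x

theorem mem_orthogonal_graphL2_iff {T : E →ₗ.[𝕜] F} {w : WithLp 2 (E × F)} :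
    w ∈ T.graphL2ᗮ ↔ ∀ x : T.domain, ⟪(x : E), w.fst⟫_𝕜 + ⟪T x, w.snd⟫_𝕜 = 0 := by
  refine ⟨fun hw x ↦ by simpa [prod_inner_apply] using hw _ (T.toLp_mem_graphL2 x),
    fun h u hu ↦ ?_⟩
  obtain ⟨x, hx₁, hx₂⟩ := T.mem_graph_iff.mp hu
  rw [prod_inner_apply]
  convert h x using 3 <;> simp [hx₁, hx₂]

theorem IsClosed.isClosed_graphL2 {T : E →ₗ.[𝕜] F} (hT : T.IsClosed) :
    _root_.IsClosed (T.graphL2 : Set (WithLp 2 (E × F))) :=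
  hT.preimage (prod_continuous_ofLp 2 E F)

section Adjoint

variable [CompleteSpace E] {T : E →ₗ.[𝕜] F}

theorem mem_graph_adjoint_of_mem_orthogonal_graphL2 (hT : Dense (T.domain : Set E))
    {z : WithLp 2 (E × F)} (hz : z ∈ T.graphL2ᗮ) : (z.snd, -z.fst) ∈ T†.graph := by
  rw [adjoint_graph_eq_graph_adjoint hT, Submodule.mem_adjoint_iff]
  rintro a b hab
  obtain ⟨x, rfl, rfl⟩ := T.mem_graph_iff.mp hab
  rw [inner_neg_right, sub_neg_eq_add, add_comm]
  exact mem_orthogonal_graphL2_iff.mp hz x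

variable [CompleteSpace F]

theorem closure_eq_of_le_of_orthogonal {S : E →ₗ.[𝕜] F} (hST : S ≤ T) (hT : T.IsClosed)
    (h : ∀ x : T.domain, (∀ y : S.domain, ⟪(y : E), x⟫_𝕜 + ⟪S y, T x⟫_𝕜 = 0) → (x : E) = 0) :
    S.closure = T := by
  have hS : S.IsClosable := hT.isClosable.leIsClosable hST
  refine eq_of_eq_graph ?_
  rw [← hS.graph_closure_eq_closure_graph]
  refine le_antisymm (S.graph.topologicalClosure_minimal (le_graph_of_le hST) hT) fun p hp ↦ ?_
  have hdense : T.graphL2 ≤ S.graphL2.topologicalClosure := by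
    refine Submodule.le_topologicalClosure_of_orthogonal (Submodule.comap_mono
      (le_graph_of_le hST)) hT.isClosed_graphL2 fun w hwT hwS ↦ ?_
    obtain ⟨x, hx₁, hx₂⟩ := T.mem_graph_iff.mp hwT
    have hx : (x : E) = 0 := h x fun y ↦ by
      simpa [hx₁, hx₂] using mem_orthogonal_graphL2_iff.mp hwS y
    have hTx : T x = 0 := by simp [show x = 0 from Subtype.ext hx]
    rw [← ofLp_eq_zero]
    exact Prod.ext (hx₁ ▸ hx) (hx₂ ▸ hTx)
  have hp' : toLp 2 p ∈ _root_.closure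
      ((prodContinuousLinearEquiv 2 𝕜 E F).toHomeomorph ⁻¹' S.graph) := hdense hp
  rw [← Homeomorph.preimage_closure] at hp'
  exact hp'

theorem exists_add_adjoint_apply_eq (hT : Dense (T.domain : Set E)) (hc : T.IsClosed) (u : E) :
    ∃ (x : T.domain) (hx : T x ∈ T†.domain), (x : E) + T† ⟨T x, hx⟩ = u := by
  have : CompleteSpace T.graphL2 := hc.isClosed_graphL2.completeSpace_coe
  obtain ⟨p, hp, z, hz, hpz⟩ := T.graphL2.exists_add_mem_mem_orthogonal (toLp 2 (u, 0))
  obtain ⟨x, hx₁, hx₂⟩ := T.mem_graph_iff.mp hp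
  obtain ⟨v, hv₁, hv₂⟩ := T†.mem_graph_iff.mp (mem_graph_adjoint_of_mem_orthogonal_graphL2 hT hz)
  have hu : u = x + z.fst := by simpa [hx₁] using congrArg WithLp.fst hpz
  have hTx : T x = ((-v : T†.domain) : F) := by
    simpa [hx₂, hv₁, eq_neg_iff_add_eq_zero] using (congrArg WithLp.snd hpz).symm
  refine ⟨x, hTx ▸ (-v).2, ?_⟩
  rw [show (⟨T x, _⟩ : T†.domain) = -v from Subtype.ext hTx, map_neg, hv₂, neg_neg, hu]

theorem IsClosed.dense_adjoint_domain (hT : Dense (T.domain : Set E)) (hc : T.IsClosed) :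
    Dense (T†.domain : Set F) := by
  rw [Submodule.dense_iff_topologicalClosure_eq_top, Submodule.topologicalClosure_eq_top_iff,
    Submodule.eq_bot_iff]
  intro g hg
  have : CompleteSpace T.graphL2 := hc.isClosed_graphL2.completeSpace_coe
  have hmem : toLp 2 (0, g) ∈ T.graphL2 := by
    rw [← T.graphL2.orthogonal_orthogonal]
    intro z hz
    obtain ⟨v, hv, -⟩ := T†.mem_graph_iff.mp (mem_graph_adjoint_of_mem_orthogonal_graphL2 hT hz)
    simp only at hv
    rw [prod_inner_apply, ofLp_fst, ofLp_snd, inner_zero_right, zero_add]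
    exact hv ▸ Submodule.inner_right_of_mem_orthogonal v.2 hg
  exact T.graph_fst_eq_zero_snd hmem rfl

theorem closure_domRestrict_range_adjoint (hT : Dense (T.domain : Set E)) (hc : T.IsClosed)
    (hker : ∀ y : T†.domain, T† y = 0 → (y : F) = 0) :
    (T†.domRestrict (LinearMap.range T.toFun)).closure = T† := by
  refine closure_eq_of_le_of_orthogonal domRestrict_le (adjoint_isClosed hT) fun y hy ↦ hker y ?_
  obtain ⟨x, hx, hxy⟩ := exists_add_adjoint_apply_eq hT hc (T† y)
  have hTx : ⟪T x, (y : F)⟫_𝕜 + ⟪T† ⟨T x, hx⟩, T† y⟫_𝕜 = 0 :=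
    hy ⟨T x, Submodule.mem_inf.mpr ⟨⟨x, rfl⟩, hx⟩⟩
  rw [(adjoint_isFormalAdjoint hT).symm x y, ← inner_add_left, hxy] at hTx
  exact inner_self_eq_zero.mp hTx

end Adjoint

end LinearPMap

theorem dom_adjoint_inter_ran_dense_and_core_general
    {H₁ H₂ : Type*}
    [NormedAddCommGroup H₁] [InnerProductSpace ℂ H₁] [CompleteSpace H₁]
    [NormedAddCommGroup H₂] [InnerProductSpace ℂ H₂] [CompleteSpace H₂]
    (A : H₁ →ₗ.[ℂ] H₂)
    (hdense : Dense (A.domain : Set H₁))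
    (hclosed : A.IsClosed)
    (hkerAdj : ∀ g : A.adjoint.domain, A.adjoint g = 0 → (g : H₂) = 0) :
    Dense (((A.adjoint.domain ⊓ LinearMap.range A.toFun : Submodule ℂ H₂)) : Set H₂) ∧
    (A.adjoint.domRestrict (LinearMap.range A.toFun)).closure = A.adjoint := by
  have hcore := closure_domRestrict_range_adjoint hdense hclosed hkerAdj
  refine ⟨?_, hcore⟩
  have hsub := (A.adjoint.domRestrict (LinearMap.range A.toFun)).closure_domain_subset_closure
  rw [hcore, domRestrict_domain, inf_comm] at hsub
  exact dense_closure.mp ((hclosed.dense_adjoint_domain hdense).mono hsub)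

/-- Lemma 3.7 (ii). Let `A : dom(A) ⊆ H₁ → H₂` be densely defined and closed
with `ker(A) = {0}` and `ker(A*) = {0}`.  Then `dom(A*) ∩ ran(A)` is dense in `H₂` and is a
core for `A*`, i.e. the closure of the restriction of `A*` to `dom(A*) ∩ ran(A)` equals `A*`. -/
theorem dom_adjoint_inter_ran_dense_and_core
    {H₁ H₂ : Type*}
    [NormedAddCommGroup H₁] [InnerProductSpace ℂ H₁] [CompleteSpace H₁]
    [TopologicalSpace.SeparableSpace H₁]
    [NormedAddCommGroup H₂] [InnerProductSpace ℂ H₂] [CompleteSpace H₂]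
    [TopologicalSpace.SeparableSpace H₂]
    (A : H₁ →ₗ.[ℂ] H₂)
    (hdense : Dense (A.domain : Set H₁))
    (hclosed : A.IsClosed)
    (hker : ∀ f : A.domain, A f = 0 → (f : H₁) = 0)
    (hkerAdj : ∀ g : A.adjoint.domain, A.adjoint g = 0 → (g : H₂) = 0) :
    Dense (((A.adjoint.domain ⊓ LinearMap.range A.toFun : Submodule ℂ H₂)) : Set H₂) ∧
    (A.adjoint.domRestrict (LinearMap.range A.toFun)).closure = A.adjoint :=
  dom_adjoint_inter_ran_dense_and_core_general A hdense hclosed hkerAdj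
end

section
/- The composed operator A* ∘ A₀ from H_A to H₁, with domain {f ∈ dom(A) : Af ∈ dom(A*)} ⊆ H_A, is closable, and its closure equals A* ∘ Ã, where Ã = closure(A₀) is the unique unitary extension of A₀; that is, closure(A* A₀) = A* closure(A₀). -/
open scoped InnerProductSpace

/-!
Along the isometry `(x, y) ↦ (Ã x, y)` of `HA × H₁` onto `K × H₁`, the graph of `A* A₀` is the
part of `graph A*` lying over `ran A`, and the graph of `A* Ã` is the part lying over
`K = closure (ran A)`. So the claim is that `ran A ∩ dom A*` is a core for `A*` on `K`.
Let `(v, w) ∈ graph A*` with `v ∈ K` be orthogonal to every `(A f, A* A f)`. Since `1 + A* A` is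
onto (von Neumann), `w = f + A* A f` for some `f`, and then
`‖w‖² = ⟪A f, v⟫ + ⟪A* A f, w⟫ = 0`. Hence `A* v = 0`, i.e. `v ⊥ ran A`, and `v ∈ K` gives `v = 0`.
-/

section ProdOrthogonal

variable {𝕜 E F : Type*} [RCLike 𝕜]
  [NormedAddCommGroup E] [InnerProductSpace 𝕜 E] [CompleteSpace E]
  [NormedAddCommGroup F] [InnerProductSpace 𝕜 F] [CompleteSpace F]

theorem Submodule.exists_add_mem_prod_orthogonal {G : Submodule 𝕜 (E × F)}
    (hG : IsClosed (G : Set (E × F))) (z : E × F) :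
    ∃ p ∈ G, ∃ q : E × F, (∀ m ∈ G, ⟪m.1, q.1⟫_𝕜 + ⟪m.2, q.2⟫_𝕜 = 0) ∧ p + q = z := by
  let e := WithLp.linearEquiv 2 𝕜 (E × F)
  let G₂ := G.comap e.toLinearMap
  have : CompleteSpace G₂ :=
    (hG.preimage (WithLp.prod_continuous_ofLp 2 E F)).completeSpace_coe
  obtain ⟨p, hp, q, hq, hpq⟩ := G₂.exists_add_mem_mem_orthogonal (WithLp.toLp 2 z)
  refine ⟨e p, hp, e q, fun m hm => ?_, ?_⟩
  · exact (Submodule.mem_orthogonal G₂ q).mp hq (e.symm m) (by simpa [G₂] using hm)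
  · rw [← map_add, ← hpq]; rfl

theorem Submodule.le_topologicalClosure_of_prod_orthogonal {M P : Submodule 𝕜 (E × F)}
    (hMP : M ≤ P) (hP : IsClosed (P : Set (E × F)))
    (h : ∀ q ∈ P, (∀ m ∈ M, ⟪m.1, q.1⟫_𝕜 + ⟪m.2, q.2⟫_𝕜 = 0) → q = 0) :
    P ≤ M.topologicalClosure := by
  intro z hz
  obtain ⟨p, hp, q, hq, rfl⟩ :=
    M.topologicalClosure.exists_add_mem_prod_orthogonal M.isClosed_topologicalClosure z
  have hpP : p ∈ P := M.topologicalClosure_minimal hMP hP hp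
  have hqP : q ∈ P := by simpa using P.sub_mem hz hpP
  rw [h q hqP fun m hm => hq m (M.le_topologicalClosure hm), add_zero]
  exact hp

end ProdOrthogonal

namespace LinearPMap

variable {𝕜 E F : Type*} [RCLike 𝕜]
  [NormedAddCommGroup E] [InnerProductSpace 𝕜 E] [CompleteSpace E]
  [NormedAddCommGroup F] [InnerProductSpace 𝕜 F]

theorem mem_adjoint_graph_iff {A : E →ₗ.[𝕜] F} (hA : Dense (A.domain : Set E)) (v : F) (w : E) :
    (v, w) ∈ A†.graph ↔ ∀ x : A.domain, ⟪A x, v⟫_𝕜 = ⟪(x : E), w⟫_𝕜 := by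
  simp only [adjoint_graph_eq_graph_adjoint hA, Submodule.mem_adjoint_iff, mem_graph_iff,
    sub_eq_zero, forall_exists_index, and_imp]
  constructor
  · intro h x
    exact h x (A x) x rfl rfl
  · rintro h _ _ x rfl rfl
    exact h x

theorem exists_apply_sub_mem_adjoint_graph [CompleteSpace F] {A : E →ₗ.[𝕜] F}
    (hA : Dense (A.domain : Set E)) (hAc : A.IsClosed) (u : E) :
    ∃ f : A.domain, (A f, u - f) ∈ A†.graph := by
  obtain ⟨p, hp, q, hq, hpq⟩ := A.graph.exists_add_mem_prod_orthogonal hAc (u, 0)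
  obtain ⟨f, hf₁, hf₂⟩ := A.mem_graph_iff.mp hp
  have hq₁ : q.1 = u - f := by rw [hf₁]; exact eq_sub_of_add_eq' (congrArg Prod.fst hpq)
  have hq₂ : q.2 = -A f := by
    rw [hf₂]; exact eq_neg_of_add_eq_zero_right (congrArg Prod.snd hpq)
  refine ⟨f, (mem_adjoint_graph_iff hA _ _).mpr fun x => ?_⟩
  have := hq _ (A.mem_graph x)
  rw [hq₁, hq₂, inner_neg_right, ← sub_eq_add_neg, sub_eq_zero] at this
  exact this.symm

theorem topologicalClosure_adjoint_graph_inf_range_prod [CompleteSpace F] {A : E →ₗ.[𝕜] F}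
    (hA : Dense (A.domain : Set E)) (hAc : A.IsClosed) :
    (A†.graph ⊓ (LinearMap.range A.toFun).prod ⊤).topologicalClosure =
      A†.graph ⊓ (LinearMap.range A.toFun).topologicalClosure.prod ⊤ := by
  set R := LinearMap.range A.toFun
  have hle : A†.graph ⊓ R.prod ⊤ ≤ A†.graph ⊓ R.topologicalClosure.prod ⊤ :=
    inf_le_inf_left _ (Submodule.prod_mono R.le_topologicalClosure le_rfl)
  have hclosed :
      _root_.IsClosed ((A†.graph ⊓ R.topologicalClosure.prod ⊤ : Submodule 𝕜 (F × E)) : Set (F × E)) :=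
    (adjoint_isClosed hA).inter (R.isClosed_topologicalClosure.prod isClosed_univ)
  refine le_antisymm (Submodule.topologicalClosure_minimal _ hle hclosed)
    (Submodule.le_topologicalClosure_of_prod_orthogonal hle hclosed ?_)
  rintro ⟨v, w⟩ ⟨hvw, hv, -⟩ horth
  have hvw' := (mem_adjoint_graph_iff hA v w).mp hvw
  obtain ⟨f, hf⟩ := exists_apply_sub_mem_adjoint_graph hA hAc w
  have hw : w = 0 := by
    have h := horth (A f, w - f) ⟨hf, ⟨f, rfl⟩, trivial⟩
    rw [hvw' f] at h
    rw [← inner_self_eq_zero (𝕜 := 𝕜), ← h, ← inner_add_left, add_sub_cancel]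
  have hv' : v ∈ R.topologicalClosureᗮ := by
    rw [Submodule.orthogonal_closure]
    rintro _ ⟨x, rfl⟩
    simpa [hw] using hvw' x
  have hv0 : v = 0 := (Submodule.mem_bot 𝕜).mp <|
    R.topologicalClosure.inf_orthogonal_eq_bot ▸ Submodule.mem_inf.mpr ⟨hv, hv'⟩
  simp [hv0, hw]

end LinearPMap

section ComapClosure

variable {R M N : Type*} [Semiring R]
  [AddCommMonoid M] [Module R M] [TopologicalSpace M] [ContinuousAdd M] [ContinuousConstSMul R M]
  [AddCommMonoid N] [Module R N] [TopologicalSpace N] [ContinuousAdd N] [ContinuousConstSMul R N]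

theorem Submodule.topologicalClosure_comap_of_isInducing {f : M →ₗ[R] N}
    (hf : Topology.IsInducing f) {G : Submodule R N} (hG : G ≤ LinearMap.range f) :
    (G.comap f).topologicalClosure = G.topologicalClosure.comap f :=
  SetLike.coe_injective <| by
    rw [Submodule.topologicalClosure_coe, Submodule.comap_coe, Submodule.comap_coe,
      Submodule.topologicalClosure_coe, hf.closure_eq_preimage_closure_image,
      Set.image_preimage_eq_of_subset hG]

end ComapClosure

section GraphComp

variable {R D E G H : Type*} [Ring R]
  [AddCommGroup D] [Module R D] [AddCommGroup E] [Module R E]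
  [AddCommGroup G] [Module R G] [AddCommGroup H] [Module R H]

theorem LinearPMap.graph_eq_comap_prodMap {S : E →ₗ.[R] H} {B : G →ₗ.[R] H} {U : E →ₗ[R] G}
    (hdom : ∀ x, x ∈ S.domain ↔ U x ∈ B.domain)
    (hval : ∀ (x : S.domain) (h : U x ∈ B.domain), S x = B ⟨U x, h⟩) :
    S.graph = B.graph.comap (U.prodMap LinearMap.id) := by
  ext ⟨x, y⟩
  simp only [Submodule.mem_comap, LinearMap.prodMap_apply, LinearMap.id_apply, mem_graph_iff]
  constructor
  · rintro ⟨z, rfl, rfl⟩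
    have h := (hdom z).mp z.2
    exact ⟨⟨_, h⟩, rfl, (hval z h).symm⟩
  · rintro ⟨v, hv, rfl⟩
    have h : U x ∈ B.domain := hv ▸ v.2
    refine ⟨⟨x, (hdom x).mpr h⟩, rfl, ?_⟩
    rw [hval _ h]
    congr 1
    exact Subtype.ext hv.symm

theorem LinearPMap.graph_eq_comap_prodMap_inf_range_prod {T : E →ₗ.[R] H} {B : G →ₗ.[R] H}
    {U : E →ₗ[R] G} (hU : Function.Injective U) {V : D →ₗ[R] G} {j : D →ₗ[R] E}
    (hUj : ∀ f, U (j f) = V f)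
    (hT : ∀ x y, (x, y) ∈ T.graph ↔ ∃ (f : D) (h : V f ∈ B.domain), j f = x ∧ B ⟨V f, h⟩ = y) :
    T.graph = (B.graph ⊓ (LinearMap.range V).prod ⊤).comap (U.prodMap LinearMap.id) := by
  ext ⟨x, y⟩
  simp only [Submodule.mem_comap, Submodule.mem_inf, Submodule.mem_prod, LinearMap.prodMap_apply,
    LinearMap.id_apply, hT, mem_graph_iff]
  constructor
  · rintro ⟨f, h, rfl, rfl⟩
    exact ⟨⟨⟨V f, h⟩, (hUj f).symm, rfl⟩, ⟨f, (hUj f).symm⟩, trivial⟩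
  · rintro ⟨⟨v, hv, rfl⟩, ⟨f, hf⟩, -⟩
    refine ⟨f, hf ▸ hv ▸ v.2, hU (by rw [hUj, hf]), ?_⟩
    congr 1
    exact Subtype.ext (hf.trans hv.symm)

end GraphComp

theorem closure_Astar_A0_eq_Astar_Atilde_general
    {H₁ H₂ HA : Type*}
    [NormedAddCommGroup H₁] [InnerProductSpace ℂ H₁] [CompleteSpace H₁]
    [NormedAddCommGroup H₂] [InnerProductSpace ℂ H₂] [CompleteSpace H₂]
    [NormedAddCommGroup HA] [InnerProductSpace ℂ HA]
    (A : H₁ →ₗ.[ℂ] H₂)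
    (hdense : Dense (A.domain : Set H₁))
    (hclosed : A.IsClosed)
    -- `j` realizes `dom(A)` as a dense subspace of the completion `HA`:
    (j : A.domain →ₗ[ℂ] HA)
    -- `K = K_A` is the closure of `ran(A)` in `H₂`:
    (K : Submodule ℂ H₂)
    (hK : (K : Set H₂) = closure ((LinearMap.range A.toFun : Submodule ℂ H₂) : Set H₂))
    -- `Ã : HA → K` is the unique unitary extension (the closure) of `A₀ : j f ↦ A f`:
    (Atil : HA ≃ₗᵢ[ℂ] ↥K)
    (hAtil : ∀ f : A.domain, (Atil (j f) : H₂) = A f)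
    -- `T = A* ∘ A₀`, with `graph(T) = {(j f, A*(A f)) : f ∈ dom(A), A f ∈ dom(A*)}`:
    (T : HA →ₗ.[ℂ] H₁)
    (hT : ∀ (x : HA) (y : H₁), (x, y) ∈ T.graph ↔
      ∃ (f : A.domain) (h : A f ∈ A.adjoint.domain),
        j f = x ∧ A.adjoint ⟨A f, h⟩ = y)
    -- `Scomp = A* ∘ Ã`, with domain `{x ∈ HA : Ã x ∈ dom(A*)}`:
    (Scomp : HA →ₗ.[ℂ] H₁)
    (hSdom : ∀ x : HA, x ∈ Scomp.domain ↔ ((Atil x : H₂) ∈ A.adjoint.domain))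
    (hSval : ∀ (x : Scomp.domain) (h : (Atil (x : HA) : H₂) ∈ A.adjoint.domain),
      Scomp x = A.adjoint ⟨(Atil (x : HA) : H₂), h⟩) :
    T.IsClosable ∧ T.closure = Scomp := by
  set R := LinearMap.range A.toFun
  let U : HA →ₗ[ℂ] H₂ := K.subtype ∘ₗ Atil.toLinearIsometry.toLinearMap
  let Θ : HA × H₁ →ₗ[ℂ] H₂ × H₁ := U.prodMap LinearMap.id
  have hU : Isometry U := isometry_subtype_coe.comp Atil.isometry
  have hK' : R.topologicalClosure = K :=
    SetLike.coe_injective ((Submodule.topologicalClosure_coe R).trans hK.symm)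
  have hTgraph : T.graph = (A.adjoint.graph ⊓ R.prod ⊤).comap Θ :=
    LinearPMap.graph_eq_comap_prodMap_inf_range_prod hU.injective hAtil hT
  have hSgraph : Scomp.graph = A.adjoint.graph.comap Θ :=
    LinearPMap.graph_eq_comap_prodMap hSdom hSval
  have hUK : (K.prod ⊤).comap Θ = ⊤ :=
    eq_top_iff.mpr fun p _ => ⟨(Atil p.1).2, trivial⟩
  have hrange : A.adjoint.graph ⊓ R.prod ⊤ ≤ LinearMap.range Θ := by
    rintro ⟨v, w⟩ ⟨-, ⟨f, rfl⟩, -⟩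
    exact ⟨(j f, w), Prod.ext (hAtil f) rfl⟩
  have hclosure : T.graph.topologicalClosure = Scomp.graph := by
    rw [hTgraph, Submodule.topologicalClosure_comap_of_isInducing
        (hU.prodMap isometry_id).isEmbedding.isInducing hrange,
      LinearPMap.topologicalClosure_adjoint_graph_inf_range_prod hdense hclosed, hK',
      Submodule.comap_inf, hUK, inf_top_eq, hSgraph]
  have hclosable : T.IsClosable := ⟨Scomp, hclosure⟩
  exact ⟨hclosable, LinearPMap.eq_of_eq_graph (hclosable.graph_closure_eq_closure_graph ▸ hclosure)⟩

/-- Theorem 3.8. Let `A : dom(A) ⊆ H₁ → H₂` be densely defined, closed with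
`ker(A) = {0}`.  Let `HA` be the Hilbert space completion of `dom(A)` with respect to
`(f,g)_A = ⟪Af, Ag⟫` (realized via `j : dom(A) → HA` with dense range), `K` the closure of
`ran(A)` in `H₂`, `A₀ : HA ⊇ ran(j) → K`, `j f ↦ A f`, and `Ã = closure(A₀) : HA → K` its
unique unitary extension.  Then the composed operator `A* A₀` (with domain
`{j f : A f ∈ dom(A*)} ⊆ HA`, mapping into `H₁`) is closable and its closure equals `A* Ã`,
i.e. `closure(A* A₀) = A* closure(A₀)`. -/
theorem closure_Astar_A0_eq_Astar_Atilde
    {H₁ H₂ HA : Type*}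
    [NormedAddCommGroup H₁] [InnerProductSpace ℂ H₁] [CompleteSpace H₁]
    [TopologicalSpace.SeparableSpace H₁]
    [NormedAddCommGroup H₂] [InnerProductSpace ℂ H₂] [CompleteSpace H₂]
    [TopologicalSpace.SeparableSpace H₂]
    [NormedAddCommGroup HA] [InnerProductSpace ℂ HA] [CompleteSpace HA]
    (A : H₁ →ₗ.[ℂ] H₂)
    (hdense : Dense (A.domain : Set H₁))
    (hclosed : A.IsClosed)
    (hker : ∀ f : A.domain, A f = 0 → (f : H₁) = 0)
    -- `j` realizes `dom(A)` as a dense subspace of the completion `HA`: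
    (j : A.domain →ₗ[ℂ] HA)
    (hjdense : Dense (Set.range j : Set HA))
    (hjinner : ∀ f g : A.domain, ⟪j f, j g⟫_ℂ = ⟪A f, A g⟫_ℂ)
    -- `K = K_A` is the closure of `ran(A)` in `H₂`:
    (K : Submodule ℂ H₂)
    (hK : (K : Set H₂) = closure ((LinearMap.range A.toFun : Submodule ℂ H₂) : Set H₂))
    (hKA : ∀ f : A.domain, A f ∈ K)
    -- `Ã : HA → K` is the unique unitary extension (the closure) of `A₀ : j f ↦ A f`:
    (Atil : HA ≃ₗᵢ[ℂ] ↥K)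
    (hAtil : ∀ f : A.domain, (Atil (j f) : H₂) = A f)
    -- `T = A* ∘ A₀`, with `graph(T) = {(j f, A*(A f)) : f ∈ dom(A), A f ∈ dom(A*)}`:
    (T : HA →ₗ.[ℂ] H₁)
    (hT : ∀ (x : HA) (y : H₁), (x, y) ∈ T.graph ↔
      ∃ (f : A.domain) (h : A f ∈ A.adjoint.domain),
        j f = x ∧ A.adjoint ⟨A f, h⟩ = y)
    -- `Scomp = A* ∘ Ã`, with domain `{x ∈ HA : Ã x ∈ dom(A*)}`:
    (Scomp : HA →ₗ.[ℂ] H₁)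
    (hSdom : ∀ x : HA, x ∈ Scomp.domain ↔ ((Atil x : H₂) ∈ A.adjoint.domain))
    (hSval : ∀ (x : Scomp.domain) (h : (Atil (x : HA) : H₂) ∈ A.adjoint.domain),
      Scomp x = A.adjoint ⟨(Atil (x : HA) : H₂), h⟩) :
    T.IsClosable ∧ T.closure = Scomp :=
  closure_Astar_A0_eq_Astar_Atilde_general A hdense hclosed j K hK Atil hAtil T hT Scomp hSdom hSval
end

section
/- (i) For each z ∈ ℂ, the quadratic pencil operator M(z) = B² − i z R − z² I with dom(M(z)) = dom(B²) is a densely defined, closed operator in H. (ii) If in addition dom(R*) ⊇ dom(B), then M(z)* = B² + i z̄ R* − z̄² I with dom(M(z)*) = dom(B²) for all z ∈ ℂ. -/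
open scoped InnerProductSpace ComplexConjugate InnerProduct

/-!
Since `B` is self-adjoint with `B ≥ δ`, it has a bounded self-adjoint inverse `S`, and since `R`
is closable, `T = R S` is bounded by the closed graph theorem. Every `f ∈ dom B²` is `S² u` with
`u = B² f`, so the graph of `M(z)` is the range of `u ↦ (S² u, (1 - i z T S - z² S²) u)`.
This map is bounded below by the interpolation inequality `‖S u‖² ≤ ‖S² u‖ ‖u‖`, so the graph is
closed, and the domain `ran S²` is dense because `S²` is self-adjoint and injective. If the graph
of an operator is the range of `(P, Q)`, its adjoint is `{(f, g) | P* g = Q* f}`; together with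
`T* f = S R* f` for `f ∈ dom B`, this identity unwinds to the formula for `M(z)*`.
-/

section NormedSpace

variable {𝕜 E F G : Type*} [NontriviallyNormedField 𝕜]
  [NormedAddCommGroup E] [NormedSpace 𝕜 E] [NormedAddCommGroup F] [NormedSpace 𝕜 F]
  [NormedAddCommGroup G] [NormedSpace 𝕜 G]
  {T : E →ₗ.[𝕜] F} {c : ℝ}

theorem LinearPMap.injective_of_bound (hc : 0 < c)
    (hbound : ∀ x : T.domain, c * ‖(x : E)‖ ≤ ‖T x‖) : Function.Injective T := fun x y hxy => by
  have h := hbound (x - y)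
  rw [T.map_sub, hxy, sub_self, norm_zero] at h
  exact sub_eq_zero.mp (Subtype.ext (norm_le_zero_iff.mp (nonpos_of_mul_nonpos_right h hc)))

theorem LinearPMap.isClosed_range_of_bound [CompleteSpace E] [CompleteSpace F] (hT : T.IsClosed)
    (hc : 0 < c) (hbound : ∀ x : T.domain, c * ‖(x : E)‖ ≤ ‖T x‖) :
    _root_.IsClosed (Set.range T) := by
  have : CompleteSpace T.graph := IsClosed.completeSpace_coe (hs := hT)
  let L : T.graph →L[𝕜] F := (ContinuousLinearMap.snd 𝕜 E F).comp T.graph.subtypeL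
  have hL : Set.range L = Set.range T := by
    ext y
    simp [L]
  have hanti : AntilipschitzWith (max c⁻¹ 1).toNNReal L := by
    refine L.antilipschitz_of_bound fun p => ?_
    obtain ⟨x, hx1, hx2⟩ := T.mem_graph_iff.mp p.2
    have h1 : ‖(p : E × F).1‖ ≤ c⁻¹ * ‖(p : E × F).2‖ := by
      rw [← hx1, ← hx2, le_inv_mul_iff₀ hc]
      exact hbound x
    change ‖(p : E × F)‖ ≤ _ * ‖(p : E × F).2‖
    rw [Real.coe_toNNReal _ (le_max_of_le_right zero_le_one)]
    exact max_le (h1.trans (by gcongr; exact le_max_left _ _))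
      (le_mul_of_one_le_left (norm_nonneg _) (le_max_right _ _))
  rw [← hL]
  exact hanti.isClosed_range L.uniformContinuous

theorem LinearPMap.exists_graph_eq_range_prod_id_of_bound [CompleteSpace E] [CompleteSpace F]
    (hT : T.IsClosed) (hc : 0 < c)
    (hbound : ∀ x : T.domain, c * ‖(x : E)‖ ≤ ‖T x‖) (hdense : Dense (Set.range T)) :
    ∃ S : F →L[𝕜] E,
      T.graph = LinearMap.range (S.prod (ContinuousLinearMap.id 𝕜 F) : F →ₗ[𝕜] E × F) := by
  have hsurj : Function.Surjective T := by
    rw [← Set.range_eq_univ, ← (T.isClosed_range_of_bound hT hc hbound).closure_eq,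
      hdense.closure_eq]
  let e := LinearEquiv.ofBijective T.toFun ⟨T.injective_of_bound hc hbound, hsurj⟩
  let S := (T.domain.subtype ∘ₗ e.symm.toLinearMap).mkContinuous c⁻¹ fun y => by
    have := hbound (e.symm y)
    rw [show T (e.symm y) = y from e.apply_symm_apply y] at this
    rwa [le_inv_mul_iff₀ hc]
  refine ⟨S, ?_⟩
  ext ⟨x, y⟩
  simp only [LinearPMap.mem_graph_iff, LinearMap.mem_range, ContinuousLinearMap.coe_coe,
    ContinuousLinearMap.prod_apply, ContinuousLinearMap.id_apply, Prod.mk.injEq]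
  constructor
  · rintro ⟨x', rfl, rfl⟩
    refine ⟨T x', ?_, rfl⟩
    exact congrArg Subtype.val (e.symm_apply_apply x')
  · rintro ⟨u, rfl, rfl⟩
    exact ⟨e.symm u, rfl, e.apply_symm_apply u⟩

theorem LinearPMap.mem_graph_iff_of_graph_eq_range_prod_id {A : E →ₗ.[𝕜] F} {S : F →L[𝕜] E}
    (hA : A.graph = LinearMap.range (S.prod (ContinuousLinearMap.id 𝕜 F) : F →ₗ[𝕜] E × F))
    {x : E} {y : F} : (x, y) ∈ A.graph ↔ x = S y := by
  simp [hA, eq_comm]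

theorem LinearPMap.injective_of_graph_eq_range_prod_id {A : E →ₗ.[𝕜] F} {S : F →L[𝕜] E}
    (hA : A.graph = LinearMap.range (S.prod (ContinuousLinearMap.id 𝕜 F) : F →ₗ[𝕜] E × F)) :
    Function.Injective S :=
  (injective_iff_map_eq_zero S).mpr fun _ hu =>
    A.graph_fst_eq_zero_snd ((mem_graph_iff_of_graph_eq_range_prod_id hA).mpr hu.symm) rfl

theorem LinearPMap.graph_eq_range_of_comp_self {A A2 : E →ₗ.[𝕜] E} {S : E →L[𝕜] E}
    (hA : A.graph = LinearMap.range (S.prod (ContinuousLinearMap.id 𝕜 E) : E →ₗ[𝕜] E × E))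
    (hA2 : ∀ x y, (x, y) ∈ A2.graph ↔
      ∃ (hx : x ∈ A.domain) (hAx : A ⟨x, hx⟩ ∈ A.domain), A ⟨A ⟨x, hx⟩, hAx⟩ = y) :
    A2.graph = LinearMap.range ((S * S).prod (ContinuousLinearMap.id 𝕜 E) : E →ₗ[𝕜] E × E) := by
  have hmem : ∀ {x y : E}, (x, y) ∈ A.graph ↔ x = S y :=
    mem_graph_iff_of_graph_eq_range_prod_id hA
  ext ⟨x, y⟩
  simp only [hA2, LinearMap.mem_range, ContinuousLinearMap.coe_coe, ContinuousLinearMap.prod_apply,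
    ContinuousLinearMap.id_apply, Prod.mk.injEq]
  constructor
  · rintro ⟨hx, hAx, rfl⟩
    refine ⟨_, ?_, rfl⟩
    exact ((hmem.mp (A.mem_graph ⟨x, hx⟩)).trans (congrArg S (hmem.mp (A.mem_graph ⟨_, hAx⟩)))).symm
  · rintro ⟨u, rfl, rfl⟩
    have hx := mem_domain_of_mem_graph (hmem.mpr rfl : (S (S u), S u) ∈ A.graph)
    have e : A ⟨_, hx⟩ = S u := ((image_iff hx).mpr (hmem.mpr rfl)).symm
    have hAx : A ⟨_, hx⟩ ∈ A.domain := by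
      rw [e]
      exact mem_domain_of_mem_graph (hmem.mpr rfl : (S u, u) ∈ A.graph)
    refine ⟨hx, hAx, ((image_iff hAx).mpr ?_).symm⟩
    rw [e]
    exact hmem.mpr rfl

theorem LinearPMap.IsClosable.exists_continuousLinearMap_comp [CompleteSpace F] [CompleteSpace G]
    {R : E →ₗ.[𝕜] F} (hR : R.IsClosable) (S : G →L[𝕜] E) (hS : ∀ u, S u ∈ R.domain) :
    ∃ T : G →L[𝕜] F, ∀ u, (S u, T u) ∈ R.graph := by
  let T : G →ₗ[𝕜] F := R.toFun ∘ₗ (S : G →ₗ[𝕜] E).codRestrict R.domain hS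
  have hT : ∀ u, (S u, T u) ∈ R.graph := fun u => R.mem_graph ⟨S u, hS u⟩
  have hle := LinearPMap.le_graph_of_le R.le_closure
  have hgraph : (T.graph : Set (G × F)) = (fun p => (S p.1, p.2)) ⁻¹' R.closure.graph := by
    ext ⟨u, v⟩
    simp only [SetLike.mem_coe, LinearMap.mem_graph_iff, Set.mem_preimage]
    constructor
    · rintro rfl
      exact hle (hT u)
    · intro h
      exact R.closure.mem_graph_snd_inj' h (hle (hT u)) rfl
  refine ⟨⟨T, T.continuous_of_isClosed_graph ?_⟩, hT⟩
  rw [hgraph]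
  exact hR.closure_isClosed.preimage (by fun_prop)

end NormedSpace

section SelfAdjoint

variable {𝕜 E : Type*} [RCLike 𝕜] [NormedAddCommGroup E] [InnerProductSpace 𝕜 E] [CompleteSpace E]
  {A : E →ₗ.[𝕜] E}

theorem IsSelfAdjoint.dense_range_of_injective (hA : IsSelfAdjoint A)
    (hinj : Function.Injective A) : Dense (Set.range A) := by
  change Dense (LinearMap.range A.toFun : Set E)
  rw [Submodule.dense_iff_topologicalClosure_eq_top, Submodule.topologicalClosure_eq_top_iff,
    Submodule.eq_bot_iff]
  intro u hu
  have hgraph : (u, 0) ∈ A.adjoint.graph := by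
    rw [LinearPMap.adjoint_graph_eq_graph_adjoint hA.dense_domain, Submodule.mem_adjoint_iff]
    rintro _ _ hab
    obtain ⟨x, rfl, rfl⟩ := A.mem_graph_iff.mp hab
    rw [inner_zero_right, sub_zero]
    exact hu _ (LinearMap.mem_range_self _ x)
  rw [LinearPMap.isSelfAdjoint_def.mp hA] at hgraph
  obtain ⟨x, rfl, hx⟩ := A.mem_graph_iff.mp hgraph
  rw [← A.map_zero] at hx
  exact congrArg Subtype.val (hinj hx)

theorem IsSelfAdjoint.exists_isSelfAdjoint_graph_eq_range_prod_id (hA : IsSelfAdjoint A) {c : ℝ}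
    (hc : 0 < c) (hbound : ∀ x : A.domain, c * ‖(x : E)‖ ≤ ‖A x‖) :
    ∃ S : E →L[𝕜] E, IsSelfAdjoint S ∧
      A.graph = LinearMap.range (S.prod (ContinuousLinearMap.id 𝕜 E) : E →ₗ[𝕜] E × E) := by
  obtain ⟨S, hS⟩ := A.exists_graph_eq_range_prod_id_of_bound hA.isClosed hc hbound
    (hA.dense_range_of_injective (A.injective_of_bound hc hbound))
  have hSgraph : ∀ u, (S u, u) ∈ A.graph := fun u => hS ▸ ⟨u, rfl⟩
  refine ⟨S, ContinuousLinearMap.isSelfAdjoint_iff_isSymmetric.mpr fun u v => ?_, hS⟩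
  have h := hSgraph v
  rw [← LinearPMap.isSelfAdjoint_def.mp hA, LinearPMap.adjoint_graph_eq_graph_adjoint
    hA.dense_domain, Submodule.mem_adjoint_iff] at h
  exact (sub_eq_zero.mp (h _ _ (hSgraph u))).symm

end SelfAdjoint

section GraphRange

variable {𝕜 E F G : Type*} [RCLike 𝕜]
  [NormedAddCommGroup E] [InnerProductSpace 𝕜 E] [NormedAddCommGroup F] [InnerProductSpace 𝕜 F]
  [NormedAddCommGroup G] [InnerProductSpace 𝕜 G]
  {T : E →ₗ.[𝕜] F} {P : G →L[𝕜] E} {Q : G →L[𝕜] F}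

theorem LinearPMap.domain_eq_range_of_graph_eq_range
    (h : T.graph = LinearMap.range (P.prod Q : G →ₗ[𝕜] E × F)) :
    T.domain = LinearMap.range (P : G →ₗ[𝕜] E) := by
  rw [← T.graph_map_fst_eq_domain, h, ← LinearMap.range_comp, ContinuousLinearMap.coe_prod,
    LinearMap.fst_prod]

theorem LinearPMap.dense_domain_of_graph_eq_range [CompleteSpace E] [CompleteSpace G]
    (h : T.graph = LinearMap.range (P.prod Q : G →ₗ[𝕜] E × F))
    (hP : LinearMap.ker (P† : E →ₗ[𝕜] G) = ⊥) :
    Dense (T.domain : Set E) := by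
  rw [domain_eq_range_of_graph_eq_range h, Submodule.dense_iff_topologicalClosure_eq_top,
    Submodule.topologicalClosure_eq_top_iff, ContinuousLinearMap.orthogonal_range, hP]

theorem LinearPMap.isClosed_of_graph_eq_range [CompleteSpace G] {K : NNReal}
    (h : T.graph = LinearMap.range (P.prod Q : G →ₗ[𝕜] E × F))
    (hPQ : AntilipschitzWith K (P.prod Q)) :
    T.IsClosed := by
  rw [LinearPMap.IsClosed, h, LinearMap.coe_range]
  exact hPQ.isClosed_range (P.prod Q).uniformContinuous

theorem LinearPMap.mem_adjoint_graph_iff_of_graph_eq_range [CompleteSpace E] [CompleteSpace F]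
    [CompleteSpace G] (hT : Dense (T.domain : Set E))
    (h : T.graph = LinearMap.range (P.prod Q : G →ₗ[𝕜] E × F))
    {f : F} {g : E} : (f, g) ∈ T.adjoint.graph ↔ (P†) g = (Q†) f := by
  simp only [adjoint_graph_eq_graph_adjoint hT, Submodule.mem_adjoint_iff, h, LinearMap.mem_range,
    ContinuousLinearMap.coe_coe, ContinuousLinearMap.prod_apply, Prod.mk.injEq,
    forall_exists_index, and_imp]
  refine ⟨fun H => ext_inner_left 𝕜 fun u => ?_, fun H a b u ha hb => ?_⟩
  · rw [ContinuousLinearMap.adjoint_inner_right, ContinuousLinearMap.adjoint_inner_right]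
    exact (sub_eq_zero.mp (H _ _ u rfl rfl)).symm
  · rw [← ha, ← hb, sub_eq_zero, ← ContinuousLinearMap.adjoint_inner_right,
      ← ContinuousLinearMap.adjoint_inner_right, H]

theorem LinearPMap.adjoint_apply_eq_of_mem_adjoint_graph [CompleteSpace E] [CompleteSpace F]
    [CompleteSpace G] {R : E →ₗ.[𝕜] F} {S : G →L[𝕜] E} {T : G →L[𝕜] F}
    (hR : Dense (R.domain : Set E)) (hT : ∀ u, (S u, T u) ∈ R.graph) {f : F} {v : E}
    (hf : (f, v) ∈ R.adjoint.graph) : (T†) f = (S†) v := by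
  rw [adjoint_graph_eq_graph_adjoint hR, Submodule.mem_adjoint_iff] at hf
  refine ext_inner_left 𝕜 fun u => ?_
  rw [ContinuousLinearMap.adjoint_inner_right, ContinuousLinearMap.adjoint_inner_right]
  exact sub_eq_zero.mp (hf _ _ (hT u))

end GraphRange

theorem mul_norm_le_norm_of_mul_norm_sq_le_re_inner {𝕜 E : Type*} [RCLike 𝕜]
    [NormedAddCommGroup E] [InnerProductSpace 𝕜 E] {x y : E} {δ : ℝ}
    (h : δ * ‖x‖ ^ 2 ≤ RCLike.re ⟪x, y⟫_𝕜) : δ * ‖x‖ ≤ ‖y‖ := by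
  rcases (norm_nonneg x).eq_or_lt with hx | hx
  · rw [← hx, mul_zero]
    exact norm_nonneg y
  refine le_of_mul_le_mul_left ?_ hx
  calc ‖x‖ * (δ * ‖x‖) = δ * ‖x‖ ^ 2 := by ring
    _ ≤ RCLike.re ⟪x, y⟫_𝕜 := h
    _ ≤ ‖x‖ * ‖y‖ := (RCLike.re_le_norm _).trans (norm_inner_le_norm x y)

theorem IsSelfAdjoint.norm_apply_sq_le {𝕜 E : Type*} [RCLike 𝕜] [NormedAddCommGroup E]
    [InnerProductSpace 𝕜 E] [CompleteSpace E] {S : E →L[𝕜] E} (hS : IsSelfAdjoint S) (u : E) :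
    ‖S u‖ ^ 2 ≤ ‖S (S u)‖ * ‖u‖ :=
  calc ‖S u‖ ^ 2 = RCLike.re ⟪S (S u), u⟫_𝕜 := by
        rw [← inner_self_eq_norm_sq (𝕜 := 𝕜)]
        exact congrArg RCLike.re (hS.isSymmetric (S u) u).symm
    _ ≤ ‖S (S u)‖ * ‖u‖ := (RCLike.re_le_norm _).trans (norm_inner_le_norm _ _)

section Pencil

variable {H : Type*} [NormedAddCommGroup H] [InnerProductSpace ℂ H]

open LinearPMap (image_iff mem_domain_iff mem_domain_of_mem_graph
  mem_graph_iff_of_graph_eq_range_prod_id)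

/-- With `S = B⁻¹` and `T = R B⁻¹` this is `M(z) B⁻²`. -/
def pencilMulInvSq (S T : H →L[ℂ] H) (z : ℂ) : H →L[ℂ] H :=
  1 - (Complex.I * z) • (T * S) - z ^ 2 • (S * S)

theorem pencilMulInvSq_apply (S T : H →L[ℂ] H) (z : ℂ) (u : H) :
    pencilMulInvSq S T z u = u - (Complex.I * z) • T (S u) - z ^ 2 • S (S u) :=
  rfl

theorem pencil_graph_eq_range {B2 R M : H →ₗ.[ℂ] H} {S T : H →L[ℂ] H} {z : ℂ}
    (hB2 : B2.graph = LinearMap.range ((S * S).prod (ContinuousLinearMap.id ℂ H) : H →ₗ[ℂ] H × H))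
    (hT : ∀ u, (S u, T u) ∈ R.graph) (hMdom : M.domain = B2.domain)
    (hMval : ∀ (x : M.domain) (hx2 : (x : H) ∈ B2.domain) (hxR : (x : H) ∈ R.domain),
      M x = B2 ⟨x, hx2⟩ - (Complex.I * z) • R ⟨x, hxR⟩ - z ^ 2 • (x : H)) :
    M.graph = LinearMap.range ((S * S).prod (pencilMulInvSq S T z) : H →ₗ[ℂ] H × H) := by
  have hB2mem : ∀ u, (S (S u), u) ∈ B2.graph := fun u =>
    (mem_graph_iff_of_graph_eq_range_prod_id hB2).mpr rfl
  have hmem : ∀ u, (S (S u), pencilMulInvSq S T z u) ∈ M.graph := by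
    intro u
    have hx2 := mem_domain_of_mem_graph (hB2mem u)
    have hxR := mem_domain_of_mem_graph (hT (S u))
    have hx : S (S u) ∈ M.domain := hMdom ▸ hx2
    rw [← image_iff hx, hMval ⟨_, hx⟩ hx2 hxR, ← (image_iff hx2).mpr (hB2mem u),
      ← (image_iff hxR).mpr (hT (S u))]
    rfl
  ext ⟨x, y⟩
  simp only [LinearMap.mem_range, ContinuousLinearMap.coe_coe, ContinuousLinearMap.prod_apply,
    Prod.mk.injEq]
  constructor
  · intro h
    obtain ⟨w, hw⟩ := mem_domain_iff.mp (hMdom ▸ mem_domain_of_mem_graph h)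
    obtain rfl := (mem_graph_iff_of_graph_eq_range_prod_id hB2).mp hw
    exact ⟨w, rfl, (M.mem_graph_snd_inj h (hmem w) rfl).symm⟩
  · rintro ⟨u, rfl, rfl⟩
    exact hmem u

variable [CompleteSpace H] {S : H →L[ℂ] H}

theorem star_pencilMulInvSq (hS : IsSelfAdjoint S) (T : H →L[ℂ] H) (z : ℂ) :
    star (pencilMulInvSq S T z) =
      1 + (Complex.I * conj z) • (S * star T) - conj z ^ 2 • (S * S) := by
  simp only [pencilMulInvSq, star_sub, star_smul, star_mul, star_one, hS.star_eq, star_pow,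
    Complex.star_def, Complex.conj_I]
  module

theorem norm_le_pencilMulInvSq (hS : IsSelfAdjoint S) (T : H →L[ℂ] H) (z : ℂ) (u : H) :
    ‖u‖ ≤ 2 * ‖pencilMulInvSq S T z u‖ + (‖z‖ ^ 2 * ‖T‖ ^ 2 + 2 * ‖z‖ ^ 2) * ‖S (S u)‖ := by
  set k := ‖z‖ * ‖T‖
  have htri : ‖u‖ ≤ ‖pencilMulInvSq S T z u‖ + k * ‖S u‖ + ‖z‖ ^ 2 * ‖S (S u)‖ := by
    have hu : u = pencilMulInvSq S T z u + (Complex.I * z) • T (S u) + z ^ 2 • S (S u) := by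
      rw [pencilMulInvSq_apply]
      abel
    calc ‖u‖ ≤ ‖pencilMulInvSq S T z u‖ + ‖(Complex.I * z) • T (S u)‖ + ‖z ^ 2 • S (S u)‖ := by
          conv_lhs => rw [hu]
          exact norm_add₃_le
      _ ≤ _ := by
          rw [norm_smul, norm_smul, norm_mul, Complex.norm_I, one_mul, norm_pow, mul_assoc]
          gcongr
          exact T.le_opNorm _
  -- AM-GM, using `‖S u‖² ≤ ‖S² u‖ ‖u‖`
  have hamgm : k * ‖S u‖ ≤ (‖u‖ + k ^ 2 * ‖S (S u)‖) / 2 := by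
    refine le_of_pow_le_pow_left₀ two_ne_zero (by positivity) ?_
    nlinarith [mul_le_mul_of_nonneg_left (hS.norm_apply_sq_le u) (sq_nonneg k),
      sq_nonneg (‖u‖ - k ^ 2 * ‖S (S u)‖)]
  rw [show k ^ 2 = ‖z‖ ^ 2 * ‖T‖ ^ 2 from mul_pow _ _ _] at hamgm
  linarith

theorem exists_antilipschitzWith_prod_pencilMulInvSq (hS : IsSelfAdjoint S) (T : H →L[ℂ] H)
    (z : ℂ) : ∃ K, AntilipschitzWith K ((S * S).prod (pencilMulInvSq S T z)) := by
  set C := ‖z‖ ^ 2 * ‖T‖ ^ 2 + 2 * ‖z‖ ^ 2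
  refine ⟨(2 + C).toNNReal, ContinuousLinearMap.antilipschitz_of_bound _ fun u => ?_⟩
  rw [Real.coe_toNNReal _ (by positivity), ContinuousLinearMap.prod_apply, Prod.norm_def]
  calc ‖u‖ ≤ 2 * ‖pencilMulInvSq S T z u‖ + C * ‖S (S u)‖ := norm_le_pencilMulInvSq hS T z u
    _ ≤ 2 * max ‖(S * S) u‖ ‖pencilMulInvSq S T z u‖
        + C * max ‖(S * S) u‖ ‖pencilMulInvSq S T z u‖ := by
      gcongr
      · exact le_max_right _ _
      · exact le_max_left _ _
    _ = (2 + C) * max ‖(S * S) u‖ ‖pencilMulInvSq S T z u‖ := by ring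

variable {B2 R M : H →ₗ.[ℂ] H} {T : H →L[ℂ] H} {z : ℂ}

theorem mem_adjoint_graph_pencil_iff (hS : IsSelfAdjoint S)
    (hB2 : B2.graph = LinearMap.range ((S * S).prod (ContinuousLinearMap.id ℂ H) : H →ₗ[ℂ] H × H))
    (hR : Dense (R.domain : Set H)) (hT : ∀ u, (S u, T u) ∈ R.graph)
    (hRS : ∀ u, S u ∈ R.adjoint.domain)
    (hM : M.graph = LinearMap.range ((S * S).prod (pencilMulInvSq S T z) : H →ₗ[ℂ] H × H))
    (hMdense : Dense (M.domain : Set H)) {f g : H} :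
    (f, g) ∈ M.adjoint.graph ↔ ∃ w v, (f, w) ∈ B2.graph ∧ (f, v) ∈ R.adjoint.graph ∧
      g = w + (Complex.I * conj z) • v - conj z ^ 2 • f := by
  have hSS : IsSelfAdjoint (S * S) := by simpa only [hS.star_eq] using IsSelfAdjoint.star_mul_self S
  have hTS : ∀ {f v}, (f, v) ∈ R.adjoint.graph → (T†) f = S v := fun hv => by
    rw [LinearPMap.adjoint_apply_eq_of_mem_adjoint_graph hR hT hv, hS.adjoint_eq]
  rw [LinearPMap.mem_adjoint_graph_iff_of_graph_eq_range hMdense hM,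
    ← ContinuousLinearMap.star_eq_adjoint, ← ContinuousLinearMap.star_eq_adjoint, hSS.star_eq,
    star_pencilMulInvSq hS]
  simp only [mem_graph_iff_of_graph_eq_range_prod_id hB2, add_apply, sub_apply, smul_apply,
    mul_apply_eq_comp, one_apply_eq_self, ContinuousLinearMap.star_eq_adjoint]
  constructor
  · intro h
    have hf : f = S (S g - (Complex.I * conj z) • (T†) f + conj z ^ 2 • S f) := by
      simp only [map_add, map_sub, map_smul, h]
      module
    obtain ⟨v, hv⟩ := mem_domain_iff.mp (hf ▸ hRS _ : f ∈ R.adjoint.domain)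
    refine ⟨g - (Complex.I * conj z) • v + conj z ^ 2 • f, v, ?_, hv, by abel⟩
    simp only [map_add, map_sub, map_smul, h, ← hTS hv]
    module
  · rintro ⟨w, v, rfl, hv, rfl⟩
    simp only [map_add, map_sub, map_smul, hTS hv]

theorem pencil_adjoint_domain_eq_and_apply (hS : IsSelfAdjoint S)
    (hB2 : B2.graph = LinearMap.range ((S * S).prod (ContinuousLinearMap.id ℂ H) : H →ₗ[ℂ] H × H))
    (hR : Dense (R.domain : Set H)) (hT : ∀ u, (S u, T u) ∈ R.graph)
    (hRS : ∀ u, S u ∈ R.adjoint.domain)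
    (hM : M.graph = LinearMap.range ((S * S).prod (pencilMulInvSq S T z) : H →ₗ[ℂ] H × H))
    (hMdense : Dense (M.domain : Set H)) :
    M.adjoint.domain = B2.domain ∧
      ∀ (f : M.adjoint.domain) (hf2 : (f : H) ∈ B2.domain) (hfR : (f : H) ∈ R.adjoint.domain),
        M.adjoint f = B2 ⟨f, hf2⟩ + (Complex.I * conj z) • R.adjoint ⟨f, hfR⟩
          - conj z ^ 2 • (f : H) := by
  have hiff := fun f g => mem_adjoint_graph_pencil_iff (f := f) (g := g) hS hB2 hR hT hRS hM hMdense
  refine ⟨le_antisymm (fun f hf => ?_) (fun f hf => ?_), fun f hf2 hfR => ?_⟩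
  · obtain ⟨w, -, hw, -⟩ := (hiff f _).mp (M.adjoint.mem_graph ⟨f, hf⟩)
    exact mem_domain_of_mem_graph hw
  · obtain ⟨w, hw⟩ := mem_domain_iff.mp hf
    have hfR : f ∈ R.adjoint.domain :=
      (mem_graph_iff_of_graph_eq_range_prod_id hB2).mp hw ▸ hRS (S w)
    obtain ⟨v, hv⟩ := mem_domain_iff.mp hfR
    exact mem_domain_of_mem_graph ((hiff f _).mpr ⟨w, v, hw, hv, rfl⟩)
  · obtain ⟨w, v, hw, hv, hg⟩ := (hiff f _).mp (M.adjoint.mem_graph f)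
    rw [hg, (image_iff hf2).mpr hw, (image_iff hfR).mpr hv]

end Pencil

theorem pencil_closed_densely_defined_and_adjoint_general
    {H : Type*}
    [NormedAddCommGroup H] [InnerProductSpace ℂ H] [CompleteSpace H]
    (B : H →ₗ.[ℂ] H)
    (hBsa : B.adjoint = B)
    (δ : ℝ) (hδ : 0 < δ)
    (hBpos : ∀ f : B.domain, δ * ‖(f : H)‖ ^ 2 ≤ (⟪(f : H), B f⟫_ℂ).re)
    (R : H →ₗ.[ℂ] H)
    (hRdense : Dense (R.domain : Set H))
    (hRclosable : R.IsClosable)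
    (hRdom : B.domain ≤ R.domain)
    -- `B²  = B ∘ B` with its natural domain:
    (B2 : H →ₗ.[ℂ] H)
    (hB2 : ∀ (x y : H), (x, y) ∈ B2.graph ↔
      ∃ (hx : x ∈ B.domain) (hBx : B ⟨x, hx⟩ ∈ B.domain), B ⟨B ⟨x, hx⟩, hBx⟩ = y)
    -- the pencil `M(z) = B² − i z R − z² I` with `dom(M(z)) = dom(B²)`:
    (M : ℂ → (H →ₗ.[ℂ] H))
    (hMdom : ∀ z : ℂ, (M z).domain = B2.domain)
    (hMval : ∀ (z : ℂ) (x : (M z).domain) (hx2 : (x : H) ∈ B2.domain)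
      (hxR : (x : H) ∈ R.domain),
      M z x = B2 ⟨(x : H), hx2⟩ - (Complex.I * z) • R ⟨(x : H), hxR⟩ - z ^ 2 • (x : H)) :
    -- (i) each `M(z)` is densely defined and closed:
    (∀ z : ℂ, Dense (((M z).domain : Submodule ℂ H) : Set H) ∧ (M z).IsClosed) ∧
    -- (ii) if moreover `dom(R*) ⊇ dom(B)`, then `M(z)* = B² + i z̄ R* − z̄² I` on `dom(B²)`:
    (B.domain ≤ R.adjoint.domain →
      ∀ z : ℂ, (M z).adjoint.domain = B2.domain ∧
        ∀ (f : (M z).adjoint.domain) (hf2 : (f : H) ∈ B2.domain)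
          (hfR : (f : H) ∈ R.adjoint.domain),
          (M z).adjoint f = B2 ⟨(f : H), hf2⟩ + (Complex.I * conj z) • R.adjoint ⟨(f : H), hfR⟩
            - (conj z) ^ 2 • (f : H)) := by
  obtain ⟨S, hS, hBS⟩ :=
    (LinearPMap.isSelfAdjoint_def.mpr hBsa).exists_isSelfAdjoint_graph_eq_range_prod_id hδ
      fun f => mul_norm_le_norm_of_mul_norm_sq_le_re_inner (𝕜 := ℂ) (hBpos f)
  have hSdom : ∀ u, S u ∈ B.domain := fun u => LinearPMap.mem_domain_of_mem_graph
    ((LinearPMap.mem_graph_iff_of_graph_eq_range_prod_id hBS).mpr rfl)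
  obtain ⟨T, hT⟩ := hRclosable.exists_continuousLinearMap_comp S fun u => hRdom (hSdom u)
  have hB2S := LinearPMap.graph_eq_range_of_comp_self hBS hB2
  have hMS := fun z => pencil_graph_eq_range (T := T) hB2S hT (hMdom z) (hMval z)
  have hker : LinearMap.ker ((S * S)† : H →ₗ[ℂ] H) = ⊥ := by
    have hinj := LinearPMap.injective_of_graph_eq_range_prod_id hBS
    rw [← ContinuousLinearMap.star_eq_adjoint, star_mul, hS.star_eq]
    exact LinearMap.ker_eq_bot.mpr (hinj.comp hinj)
  have hMdense := fun z => LinearPMap.dense_domain_of_graph_eq_range (hMS z) hker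
  refine ⟨fun z => ⟨hMdense z, ?_⟩, fun hR' z => pencil_adjoint_domain_eq_and_apply hS hB2S
    hRdense hT (fun u => hR' (hSdom u)) (hMS z) (hMdense z)⟩
  obtain ⟨K, hK⟩ := exists_antilipschitzWith_prod_pencilMulInvSq hS T z
  exact LinearPMap.isClosed_of_graph_eq_range (hMS z) hK

/-- Lemma 4.2. Let `B` be a self-adjoint operator in the complex separable
Hilbert space `H` with `B ≥ δ I` for some `δ > 0`, and let `R` be a densely defined closable
operator in `H` with `dom(R) ⊇ dom(B)`.  Consider the quadratic operator pencil
`M(z) = B² − i z R − z² I` with `dom(M(z)) = dom(B²)`, `z ∈ ℂ`.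
(i) For each `z ∈ ℂ`, `M(z)` is a densely defined, closed operator in `H`.
(ii) If in addition `dom(R*) ⊇ dom(B)`, then `M(z)* = B² + i z̄ R* − z̄² I` with
`dom(M(z)*) = dom(B²)` for all `z ∈ ℂ`. -/
theorem pencil_closed_densely_defined_and_adjoint
    {H : Type*}
    [NormedAddCommGroup H] [InnerProductSpace ℂ H] [CompleteSpace H]
    [TopologicalSpace.SeparableSpace H]
    (B : H →ₗ.[ℂ] H)
    (hBdense : Dense (B.domain : Set H))
    (hBsa : B.adjoint = B)
    (δ : ℝ) (hδ : 0 < δ)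
    (hBpos : ∀ f : B.domain, δ * ‖(f : H)‖ ^ 2 ≤ (⟪(f : H), B f⟫_ℂ).re)
    (R : H →ₗ.[ℂ] H)
    (hRdense : Dense (R.domain : Set H))
    (hRclosable : R.IsClosable)
    (hRdom : B.domain ≤ R.domain)
    -- `B²  = B ∘ B` with its natural domain:
    (B2 : H →ₗ.[ℂ] H)
    (hB2 : ∀ (x y : H), (x, y) ∈ B2.graph ↔
      ∃ (hx : x ∈ B.domain) (hBx : B ⟨x, hx⟩ ∈ B.domain), B ⟨B ⟨x, hx⟩, hBx⟩ = y)
    -- the pencil `M(z) = B² − i z R − z² I` with `dom(M(z)) = dom(B²)`: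
    (M : ℂ → (H →ₗ.[ℂ] H))
    (hMdom : ∀ z : ℂ, (M z).domain = B2.domain)
    (hMval : ∀ (z : ℂ) (x : (M z).domain) (hx2 : (x : H) ∈ B2.domain)
      (hxR : (x : H) ∈ R.domain),
      M z x = B2 ⟨(x : H), hx2⟩ - (Complex.I * z) • R ⟨(x : H), hxR⟩ - z ^ 2 • (x : H)) :
    -- (i) each `M(z)` is densely defined and closed:
    (∀ z : ℂ, Dense (((M z).domain : Submodule ℂ H) : Set H) ∧ (M z).IsClosed) ∧
    -- (ii) if moreover `dom(R*) ⊇ dom(B)`, then `M(z)* = B² + i z̄ R* − z̄² I` on `dom(B²)`: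
    (B.domain ≤ R.adjoint.domain →
      ∀ z : ℂ, (M z).adjoint.domain = B2.domain ∧
        ∀ (f : (M z).adjoint.domain) (hf2 : (f : H) ∈ B2.domain)
          (hfR : (f : H) ∈ R.adjoint.domain),
          (M z).adjoint f = B2 ⟨(f : H), hf2⟩ + (Complex.I * conj z) • R.adjoint ⟨(f : H), hfR⟩
            - (conj z) ^ 2 • (f : H)) :=
  pencil_closed_densely_defined_and_adjoint_general B hBsa δ hδ hBpos R hRdense hRclosable hRdom B2
    hB2 M hMdom hMval
end

section
/- The Dirac-type operator Q in H ⊕ H, Q(f,g) = (−iRf + Bg, Bf) with dom(Q) = dom(B) ⊕ dom(B), is injective and closed; moreover Q maps dom(Q) bijectively onto H ⊕ H and its inverse is the bounded operator on H ⊕ H given by Q^{-1}(u,v) = (B^{-1} v, B^{-1} u + i B^{-1} R B^{-1} v), i.e., 0 belongs to the resolvent set of Q. -/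
/-!
Write `Q` as the block operator `[[-iR, B], [B, 0]]`. Since `R` is closable and `B⁻¹` is bounded
with range `dom B ⊆ dom R`, the closed graph theorem makes `S = R B⁻¹` bounded, so
`[[0, B⁻¹], [B⁻¹, i B⁻¹ S]]` is a bounded operator on `H ⊕ H`. A direct computation shows that
`(x, y)` lies in the graph of `Q` exactly when `x` is the image of `y` under this operator; both
injectivity and closedness of `Q` are read off from that description of its graph.
-/

open scoped InnerProductSpace

namespace LinearPMap

section Algebraic

variable {𝕜 E F G : Type*} [Ring 𝕜] [AddCommGroup E] [Module 𝕜 E] [AddCommGroup F] [Module 𝕜 F]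
  [AddCommGroup G] [Module 𝕜 G]

def compOfMapsTo (R : E →ₗ.[𝕜] F) (T : G →ₗ[𝕜] E) (hT : ∀ x, T x ∈ R.domain) : G →ₗ[𝕜] F :=
  R.toFun ∘ₗ T.codRestrict R.domain hT

theorem mem_graph_iff_eq_of_inverse {B : E →ₗ.[𝕜] F} {Binv : F → E}
    (hBinv : ∀ u, (Binv u, u) ∈ B.graph) (hBinv' : ∀ x : B.domain, Binv (B x) = x)
    {x : E} {y : F} : (x, y) ∈ B.graph ↔ x = Binv y := by
  refine ⟨fun h => ?_, fun h => h ▸ hBinv y⟩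
  obtain ⟨z, rfl, rfl⟩ := B.mem_graph_iff.mp h
  exact (hBinv' z).symm

end Algebraic

section Topological

variable {𝕜 E F G : Type*} [NontriviallyNormedField 𝕜] [NormedAddCommGroup E] [NormedSpace 𝕜 E]
  [NormedAddCommGroup F] [NormedSpace 𝕜 F] [NormedAddCommGroup G] [NormedSpace 𝕜 G]

theorem isClosed_graph_compOfMapsTo {R : E →ₗ.[𝕜] F} (hR : R.IsClosable) (T : G →L[𝕜] E)
    (hT : ∀ x, T x ∈ R.domain) :
    _root_.IsClosed ((R.compOfMapsTo (T : G →ₗ[𝕜] E) hT).graph : Set (G × F)) := by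
  have hgraph : ((R.compOfMapsTo (T : G →ₗ[𝕜] E) hT).graph : Set (G × F)) =
      Prod.map T id ⁻¹' R.closure.graph := by
    ext ⟨x, y⟩
    have hx : (T x, R.compOfMapsTo T hT x) ∈ R.closure.graph :=
      le_graph_of_le R.le_closure (R.mem_graph ⟨T x, hT x⟩)
    refine ⟨fun h => ?_, fun h => ?_⟩
    · have hy : y = _ := (LinearMap.mem_graph_iff _ _).mp h
      exact hy ▸ hx
    · exact (LinearMap.mem_graph_iff _ _).mpr (R.closure.mem_graph_snd_inj h hx rfl)
  rw [hgraph]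
  exact hR.closure_isClosed.preimage (T.continuous.prodMap continuous_id)

variable [CompleteSpace F] [CompleteSpace G]

noncomputable def compOfMapsToCLM {R : E →ₗ.[𝕜] F} (hR : R.IsClosable) (T : G →L[𝕜] E)
    (hT : ∀ x, T x ∈ R.domain) : G →L[𝕜] F :=
  .ofIsClosedGraph (isClosed_graph_compOfMapsTo hR T hT)

end Topological

theorem isClosed_of_mem_graph_iff {𝕜 E F : Type*} [CommRing 𝕜] [AddCommGroup E] [Module 𝕜 E]
    [TopologicalSpace E] [T2Space E] [AddCommGroup F] [Module 𝕜 F] [TopologicalSpace F]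
    {Q : E →ₗ.[𝕜] F} {S : F → E} (hS : Continuous S) (hQ : ∀ x y, (x, y) ∈ Q.graph ↔ x = S y) :
    Q.IsClosed := by
  have hgraph : (Q.graph : Set (E × F)) = {p | p.1 = S p.2} := Set.ext fun p => hQ p.1 p.2
  rw [LinearPMap.IsClosed, hgraph]
  exact isClosed_eq continuous_fst (hS.comp continuous_snd)

end LinearPMap

section Dirac

open Complex LinearPMap

variable {H : Type*}

theorem dirac_mem_graph_iff [AddCommGroup H] [Module ℂ H] {B R : H →ₗ.[ℂ] H}
    {Q : WithLp 2 (H × H) →ₗ.[ℂ] WithLp 2 (H × H)}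
    (hRdom : B.domain ≤ R.domain)
    (hQdom : ∀ x : WithLp 2 (H × H), x ∈ Q.domain ↔
      (x.fst ∈ B.domain ∧ x.snd ∈ B.domain))
    (hQval : ∀ (x : Q.domain) (h1 : (x : WithLp 2 (H × H)).fst ∈ B.domain)
      (h2 : (x : WithLp 2 (H × H)).snd ∈ B.domain)
      (hR : (x : WithLp 2 (H × H)).fst ∈ R.domain),
      Q x = (WithLp.equiv 2 (H × H)).symm
        (-(I • R ⟨(x : WithLp 2 (H × H)).fst, hR⟩) + B ⟨(x : WithLp 2 (H × H)).snd, h2⟩,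
          B ⟨(x : WithLp 2 (H × H)).fst, h1⟩))
    (x y : WithLp 2 (H × H)) :
    (x, y) ∈ Q.graph ↔ ∃ r, (x.fst, y.snd) ∈ B.graph ∧ (x.fst, r) ∈ R.graph ∧
      (x.snd, y.fst + I • r) ∈ B.graph := by
  constructor
  · intro hxy
    obtain ⟨z, rfl, rfl⟩ := Q.mem_graph_iff.mp hxy
    obtain ⟨h1, h2⟩ := (hQdom z).mp z.2
    refine ⟨R ⟨_, hRdom h1⟩, ?_, R.mem_graph ⟨_, hRdom h1⟩, ?_⟩ <;> rw [hQval z h1 h2 (hRdom h1)]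
    · exact B.mem_graph ⟨_, h1⟩
    · simpa using B.mem_graph ⟨_, h2⟩
  · rintro ⟨r, hf, hr, hg⟩
    have h1 := mem_domain_of_mem_graph hf
    have h2 := mem_domain_of_mem_graph hg
    have hx : x ∈ Q.domain := (hQdom x).mpr ⟨h1, h2⟩
    refine Q.mem_graph_iff.mpr ⟨⟨x, hx⟩, rfl, ?_⟩
    rw [hQval ⟨x, hx⟩ h1 h2 (mem_domain_of_mem_graph hr), ← (image_iff h1).mpr hf,
      ← (image_iff h2).mpr hg, ← (image_iff _).mpr hr, add_comm y.fst, neg_add_cancel_left]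
    rfl

variable [NormedAddCommGroup H] [NormedSpace ℂ H]

noncomputable def diracInv (Binv S : H →L[ℂ] H) : WithLp 2 (H × H) →L[ℂ] WithLp 2 (H × H) :=
  (WithLp.prodContinuousLinearEquiv 2 ℂ H H).symm.toContinuousLinearMap ∘L
    ((Binv ∘L WithLp.sndL 2 ℂ H H).prod
      (Binv ∘L WithLp.fstL 2 ℂ H H + I • Binv ∘L S ∘L WithLp.sndL 2 ℂ H H))

theorem diracInv_apply (Binv S : H →L[ℂ] H) (w : WithLp 2 (H × H)) :
    diracInv Binv S w = WithLp.toLp 2 (Binv w.snd, Binv w.fst + I • Binv (S w.snd)) :=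
  rfl

theorem dirac_mem_graph_iff_eq_diracInv {B R : H →ₗ.[ℂ] H}
    {Q : WithLp 2 (H × H) →ₗ.[ℂ] WithLp 2 (H × H)} {Binv S : H →L[ℂ] H}
    (hQ : ∀ x y : WithLp 2 (H × H), (x, y) ∈ Q.graph ↔ ∃ r, (x.fst, y.snd) ∈ B.graph ∧
      (x.fst, r) ∈ R.graph ∧ (x.snd, y.fst + I • r) ∈ B.graph)
    (hBinv : ∀ u, (Binv u, u) ∈ B.graph) (hBinv' : ∀ x : B.domain, Binv (B x) = x)
    (hS : ∀ v, (Binv v, S v) ∈ R.graph) (x y : WithLp 2 (H × H)) :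
    (x, y) ∈ Q.graph ↔ x = diracInv Binv S y := by
  simp only [hQ, mem_graph_iff_eq_of_inverse hBinv hBinv', diracInv_apply]
  constructor
  · rintro ⟨r, h1, hr, h2⟩
    obtain rfl : r = S y.snd := R.mem_graph_snd_inj hr (hS _) h1
    calc x = WithLp.toLp 2 (x.fst, x.snd) := rfl
      _ = _ := by rw [h1, h2, _root_.map_add, _root_.map_smul]
  · rintro rfl
    exact ⟨S y.snd, rfl, hS _, by rw [_root_.map_add, _root_.map_smul]; rfl⟩

end Dirac

theorem dirac_injective_closed_boundedly_invertible_general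
    {H : Type*}
    [NormedAddCommGroup H] [InnerProductSpace ℂ H] [CompleteSpace H]
    (B : H →ₗ.[ℂ] H)
    -- the (everywhere defined, bounded) inverse `B⁻¹ ∈ B(H)`:
    (Binv : H →L[ℂ] H)
    (hBinv : ∀ u : H, (Binv u, u) ∈ B.graph)
    (hBinv' : ∀ x : B.domain, Binv (B x) = (x : H))
    (R : H →ₗ.[ℂ] H)
    (hRclosable : R.IsClosable)
    (hRdom : B.domain ≤ R.domain)
    -- the Dirac-type operator `Q(f,g) = (−iRf + Bg, Bf)`, `dom(Q) = dom(B) ⊕ dom(B)`: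
    (Q : WithLp 2 (H × H) →ₗ.[ℂ] WithLp 2 (H × H))
    (hQdom : ∀ x : WithLp 2 (H × H), x ∈ Q.domain ↔
      (x.fst ∈ B.domain ∧ x.snd ∈ B.domain))
    (hQval : ∀ (x : Q.domain) (h1 : (x : WithLp 2 (H × H)).fst ∈ B.domain)
      (h2 : (x : WithLp 2 (H × H)).snd ∈ B.domain)
      (hR : (x : WithLp 2 (H × H)).fst ∈ R.domain),
      Q x = (WithLp.equiv 2 (H × H)).symm
        (-(Complex.I • R ⟨(x : WithLp 2 (H × H)).fst, hR⟩) + B ⟨(x : WithLp 2 (H × H)).snd, h2⟩,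
          B ⟨(x : WithLp 2 (H × H)).fst, h1⟩)) :
    -- `Q` is injective:
    (∀ x : Q.domain, Q x = 0 → (x : WithLp 2 (H × H)) = 0) ∧
    -- `Q` is closed:
    Q.IsClosed ∧
    -- `Q` is bijective onto `H ⊕ H` with bounded inverse
    -- `Q⁻¹(u,v) = (B⁻¹v, B⁻¹u + i B⁻¹ R B⁻¹ v)`:
    (∃ Qinv : WithLp 2 (H × H) →L[ℂ] WithLp 2 (H × H),
      (∀ u v : H, Qinv ((WithLp.equiv 2 (H × H)).symm (u, v)) =
        (WithLp.equiv 2 (H × H)).symm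
          (Binv v, Binv u + Complex.I •
            Binv (R ⟨Binv v, hRdom (B.mem_domain_of_mem_graph (hBinv v))⟩))) ∧
      (∀ w : WithLp 2 (H × H), (Qinv w, w) ∈ Q.graph) ∧
      (∀ x y : WithLp 2 (H × H), (x, y) ∈ Q.graph → Qinv y = x)) := by
  let S := LinearPMap.compOfMapsToCLM hRclosable Binv fun v =>
    hRdom (B.mem_domain_of_mem_graph (hBinv v))
  have hgraph : ∀ x y, (x, y) ∈ Q.graph ↔ x = diracInv Binv S y :=
    dirac_mem_graph_iff_eq_diracInv (dirac_mem_graph_iff hRdom hQdom hQval) hBinv hBinv'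
      fun v => R.mem_graph ⟨Binv v, _⟩
  refine ⟨fun x hx => ?_,
    LinearPMap.isClosed_of_mem_graph_iff (diracInv Binv S).continuous hgraph,
    diracInv Binv S, fun u v => rfl, fun w => (hgraph _ _).mpr rfl,
    fun x y hxy => ((hgraph x y).mp hxy).symm⟩
  rw [(hgraph _ _).mp (Q.mem_graph x), hx, map_zero]

/-- from Theorem 4.3. Let `B` be a self-adjoint operator in `H` with
`B ≥ δ I`, `δ > 0` (so that `B⁻¹ ∈ B(H)`), and let `R` be densely defined and closable with
`dom(R) ⊇ dom(B)`.  The Dirac-type operator `Q` in `H ⊕ H`, `Q(f,g) = (−iRf + Bg, Bf)` with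
`dom(Q) = dom(B) ⊕ dom(B)`, is injective and closed; moreover `Q` maps `dom(Q)` bijectively
onto `H ⊕ H` and its inverse is the bounded operator
`Q⁻¹(u,v) = (B⁻¹v, B⁻¹u + i B⁻¹ R B⁻¹ v)`, i.e. `0 ∈ ρ(Q)`. -/
theorem dirac_injective_closed_boundedly_invertible
    {H : Type*}
    [NormedAddCommGroup H] [InnerProductSpace ℂ H] [CompleteSpace H]
    [TopologicalSpace.SeparableSpace H]
    (B : H →ₗ.[ℂ] H)
    (hBdense : Dense (B.domain : Set H))
    (hBsa : B.adjoint = B)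
    (δ : ℝ) (hδ : 0 < δ)
    (hBpos : ∀ f : B.domain, δ * ‖(f : H)‖ ^ 2 ≤ (⟪(f : H), B f⟫_ℂ).re)
    -- the (everywhere defined, bounded) inverse `B⁻¹ ∈ B(H)`:
    (Binv : H →L[ℂ] H)
    (hBinv : ∀ u : H, (Binv u, u) ∈ B.graph)
    (hBinv' : ∀ x : B.domain, Binv (B x) = (x : H))
    (R : H →ₗ.[ℂ] H)
    (hRdense : Dense (R.domain : Set H))
    (hRclosable : R.IsClosable)
    (hRdom : B.domain ≤ R.domain)
    -- the Dirac-type operator `Q(f,g) = (−iRf + Bg, Bf)`, `dom(Q) = dom(B) ⊕ dom(B)`: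
    (Q : WithLp 2 (H × H) →ₗ.[ℂ] WithLp 2 (H × H))
    (hQdom : ∀ x : WithLp 2 (H × H), x ∈ Q.domain ↔
      (x.fst ∈ B.domain ∧ x.snd ∈ B.domain))
    (hQval : ∀ (x : Q.domain) (h1 : (x : WithLp 2 (H × H)).fst ∈ B.domain)
      (h2 : (x : WithLp 2 (H × H)).snd ∈ B.domain)
      (hR : (x : WithLp 2 (H × H)).fst ∈ R.domain),
      Q x = (WithLp.equiv 2 (H × H)).symm
        (-(Complex.I • R ⟨(x : WithLp 2 (H × H)).fst, hR⟩) + B ⟨(x : WithLp 2 (H × H)).snd, h2⟩,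
          B ⟨(x : WithLp 2 (H × H)).fst, h1⟩)) :
    -- `Q` is injective:
    (∀ x : Q.domain, Q x = 0 → (x : WithLp 2 (H × H)) = 0) ∧
    -- `Q` is closed:
    Q.IsClosed ∧
    -- `Q` is bijective onto `H ⊕ H` with bounded inverse
    -- `Q⁻¹(u,v) = (B⁻¹v, B⁻¹u + i B⁻¹ R B⁻¹ v)`:
    (∃ Qinv : WithLp 2 (H × H) →L[ℂ] WithLp 2 (H × H),
      (∀ u v : H, Qinv ((WithLp.equiv 2 (H × H)).symm (u, v)) =
        (WithLp.equiv 2 (H × H)).symm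
          (Binv v, Binv u + Complex.I •
            Binv (R ⟨Binv v, hRdom (B.mem_domain_of_mem_graph (hBinv v))⟩))) ∧
      (∀ w : WithLp 2 (H × H), (Qinv w, w) ∈ Q.graph) ∧
      (∀ x y : WithLp 2 (H × H), (x, y) ∈ Q.graph → Qinv y = x)) :=
  dirac_injective_closed_boundedly_invertible_general B Binv hBinv hBinv' R hRclosable hRdom Q hQdom
    hQval
end

section
/- For every z ∈ ℂ, the operator Q − z I (with domain dom(B) ⊕ dom(B) in H ⊕ H) has an everywhere defined bounded inverse on H ⊕ H if and only if the pencil operator M(z) = B² − i z R − z² I (with domain dom(B²)) has an everywhere defined bounded inverse on H; consequently the spectrum of Q coincides with the spectrum of the pencil, σ(Q) = σ(M(·)) = {λ ∈ ℂ : M(λ) is not boundedly invertible}. -/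
/-!
Since `B` is self-adjoint and `B ≥ δ`, it has a bounded inverse, and by the closed graph
theorem so does the everywhere defined operator `K = R B⁻¹` (with `R` replaced by its closure).
Eliminating `g` from `(Q - z)(f, g) = (u, v)` leads to the pencil: `f = B⁻¹ v + z h`, `g = B h`
with `M(z) h = u + i R B⁻¹ v + z B⁻¹ v`; conversely `M(z)⁻¹ w` is the first component of
`(Q - z)⁻¹ (0, B⁻¹ w)`. The kernels of `Q - z` and `M(z)` correspond in the same way. A bounded
inverse of `Q - z` then comes from the closed graph theorem again: `Q` is closed because its
graph is cut out by the closed conditions `(f, b) ∈ graph B` and `(g, a + i K b) ∈ graph B`.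
-/

open scoped InnerProductSpace

/-- `T − z I` possesses an everywhere defined bounded (two-sided) inverse. -/
def HasBoundedInverseShifted {V : Type*} [NormedAddCommGroup V] [NormedSpace ℂ V]
    (T : V →ₗ.[ℂ] V) (z : ℂ) : Prop :=
  ∃ S : V →L[ℂ] V, (∀ w : V, (S w, w + z • S w) ∈ T.graph) ∧
    ∀ x y : V, (x, y) ∈ T.graph → S (y - z • x) = x

section ClosedGraph

variable {𝕜 : Type*} [NontriviallyNormedField 𝕜]
  {E F G : Type*} [NormedAddCommGroup E] [NormedSpace 𝕜 E]
  [NormedAddCommGroup F] [NormedSpace 𝕜 F] [NormedAddCommGroup G] [NormedSpace 𝕜 G]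

theorem Submodule.exists_continuousLinearMap_forall_mem_of_isClosed [CompleteSpace E]
    [CompleteSpace F] {g : Submodule 𝕜 (E × F)} (hg : IsClosed (g : Set (E × F)))
    (htotal : ∀ x, ∃ y, (x, y) ∈ g) (hfun : ∀ y, ((0 : E), y) ∈ g → y = 0) :
    ∃ S : E →L[𝕜] F, ∀ x, (x, S x) ∈ g := by
  choose S hS using htotal
  have huniq : ∀ x y, (x, y) ∈ g → S x = y := fun x y hxy =>
    (sub_eq_zero.mp (hfun _ (by simpa using g.sub_mem hxy (hS x)))).symm
  let L : E →ₗ[𝕜] F :=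
    { toFun := S
      map_add' := fun x x' => huniq _ _ (by simpa using g.add_mem (hS x) (hS x'))
      map_smul' := fun c x => huniq _ _ (by simpa using g.smul_mem c (hS x)) }
  have hgraph : (L.graph : Set (E × F)) = g := by
    ext ⟨x, y⟩
    simp only [SetLike.mem_coe, LinearMap.mem_graph_iff]
    exact ⟨fun h => h ▸ hS x, fun h => (huniq x y h).symm⟩
  exact ⟨⟨L, L.continuous_of_isClosed_graph (hgraph ▸ hg)⟩, hS⟩

theorem LinearPMap.IsClosable.exists_continuousLinearMap_comp_s9 [CompleteSpace F]
    [CompleteSpace G] {T : E →ₗ.[𝕜] F} (hT : T.IsClosable) (A : G →L[𝕜] E)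
    (hA : ∀ y, A y ∈ T.domain) : ∃ C : G →L[𝕜] F, ∀ y, (A y, C y) ∈ T.graph := by
  let L : G × F →L[𝕜] E × F := A.prodMap (ContinuousLinearMap.id 𝕜 F)
  have hAT : ∀ y, (A y, T ⟨A y, hA y⟩) ∈ T.closure.graph := fun y =>
    T.le_graph_of_le T.le_closure (T.mem_graph ⟨A y, hA y⟩)
  obtain ⟨C, hC⟩ := Submodule.exists_continuousLinearMap_forall_mem_of_isClosed
    (g := T.closure.graph.comap (L : G × F →ₗ[𝕜] E × F))
    (hT.closure_isClosed.preimage L.continuous) (fun y => ⟨_, hAT y⟩)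
    (fun y hy => T.closure.graph_fst_eq_zero_snd (by simpa [L] using hy) rfl)
  refine ⟨C, fun y => ?_⟩
  have hCy : (A y, C y) ∈ T.closure.graph := hC y
  rw [T.closure.mem_graph_snd_inj hCy (hAT y) rfl]
  exact T.mem_graph ⟨A y, hA y⟩

theorem LinearPMap.eq_zero_of_mem_graph_of_mul_norm_le {T : E →ₗ.[𝕜] F} {δ : ℝ} (hδ : 0 < δ)
    (hlow : ∀ x : T.domain, δ * ‖(x : E)‖ ≤ ‖T x‖) {x : E} (hx : (x, 0) ∈ T.graph) : x = 0 := by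
  obtain ⟨y, rfl, hy⟩ := T.mem_graph_iff.mp hx
  have := hlow y
  rw [hy, norm_zero] at this
  exact norm_eq_zero.mp (le_antisymm (nonpos_of_mul_nonpos_right this hδ) (norm_nonneg _))

theorem LinearPMap.IsClosed.isClosed_range [CompleteSpace E] [CompleteSpace F]
    {T : E →ₗ.[𝕜] F} (hT : T.IsClosed) {δ : ℝ} (hδ : 0 < δ)
    (hlow : ∀ x : T.domain, δ * ‖(x : E)‖ ≤ ‖T x‖) : _root_.IsClosed (Set.range T) := by
  have : CompleteSpace T.graph := hT.completeSpace_coe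
  let φ : T.graph →L[𝕜] F := (ContinuousLinearMap.snd 𝕜 E F).comp T.graph.subtypeL
  have hφ : AntilipschitzWith (⟨max δ⁻¹ 1, by positivity⟩ : NNReal) φ := by
    refine φ.antilipschitz_of_bound fun ⟨⟨a, b⟩, hp⟩ => ?_
    obtain ⟨x, rfl, rfl⟩ := T.mem_graph_iff.mp hp
    have hx : ‖(x : E)‖ ≤ δ⁻¹ * ‖T x‖ := (le_inv_mul_iff₀ hδ).mpr (hlow x)
    change max ‖(x : E)‖ ‖T x‖ ≤ max δ⁻¹ 1 * ‖T x‖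
    exact max_le (hx.trans (by gcongr; exact le_max_left _ _))
      (le_mul_of_one_le_left (norm_nonneg _) (le_max_right _ _))
  have hrange : Set.range φ = Set.range T := by
    ext y
    rw [LinearPMap.mem_range_iff]
    exact ⟨fun ⟨⟨⟨a, b⟩, hp⟩, hb⟩ => ⟨a, hb ▸ hp⟩, fun ⟨a, hp⟩ => ⟨⟨(a, y), hp⟩, rfl⟩⟩
  exact hrange ▸ hφ.isClosed_range φ.uniformContinuous

end ClosedGraph

section SelfAdjoint

variable {𝕜 E : Type*} [RCLike 𝕜] [NormedAddCommGroup E] [InnerProductSpace 𝕜 E]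

theorem LinearPMap.mul_norm_le_norm_apply_of_mul_sq_le_re_inner {T : E →ₗ.[𝕜] E} {δ : ℝ}
    (hT : ∀ x : T.domain, δ * ‖(x : E)‖ ^ 2 ≤ RCLike.re ⟪(x : E), T x⟫_𝕜) (x : T.domain) :
    δ * ‖(x : E)‖ ≤ ‖T x‖ := by
  rcases (norm_nonneg (x : E)).eq_or_lt with h0 | hpos
  · rw [← h0, mul_zero]
    exact norm_nonneg _
  refine le_of_mul_le_mul_right ?_ hpos
  calc δ * ‖(x : E)‖ * ‖(x : E)‖ = δ * ‖(x : E)‖ ^ 2 := by ring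
    _ ≤ RCLike.re ⟪(x : E), T x⟫_𝕜 := hT x
    _ ≤ ‖⟪(x : E), T x⟫_𝕜‖ := RCLike.re_le_norm _
    _ ≤ ‖(x : E)‖ * ‖T x‖ := norm_inner_le_norm _ _
    _ = ‖T x‖ * ‖(x : E)‖ := mul_comm _ _

theorem IsSelfAdjoint.surjective_of_mul_norm_le [CompleteSpace E] {A : E →ₗ.[𝕜] E}
    (hA : IsSelfAdjoint A) {δ : ℝ} (hδ : 0 < δ) (hlow : ∀ x : A.domain, δ * ‖(x : E)‖ ≤ ‖A x‖) :
    Function.Surjective A := by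
  have hclosed : IsClosed (LinearMap.range A.toFun : Set E) := hA.isClosed.isClosed_range hδ hlow
  have : CompleteSpace (LinearMap.range A.toFun) := hclosed.completeSpace_coe
  have hperp : (LinearMap.range A.toFun)ᗮ = ⊥ := by
    refine (Submodule.eq_bot_iff _).mpr fun y hy => ?_
    have hy0 : (y, 0) ∈ A.adjoint.graph := by
      rw [LinearPMap.adjoint_graph_eq_graph_adjoint hA.dense_domain, Submodule.mem_adjoint_iff]
      intro a b hab
      rw [inner_zero_right, sub_zero]
      exact (Submodule.mem_orthogonal _ _).mp hy b (LinearPMap.mem_range_iff.mpr ⟨a, hab⟩)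
    rw [LinearPMap.isSelfAdjoint_def.mp hA] at hy0
    exact LinearPMap.eq_zero_of_mem_graph_of_mul_norm_le hδ hlow hy0
  intro y
  have hy : y ∈ LinearMap.range A.toFun :=
    Submodule.orthogonal_eq_bot_iff.mp hperp ▸ Submodule.mem_top
  exact hy

end SelfAdjoint

section BoundedInverse

variable {V : Type*} [NormedAddCommGroup V] [NormedSpace ℂ V] {T : V →ₗ.[ℂ] V} {z : ℂ}

theorem hasBoundedInverseShifted_zero_iff : HasBoundedInverseShifted T 0 ↔
    ∃ S : V →L[ℂ] V, (∀ w, (S w, w) ∈ T.graph) ∧ ∀ x y, (x, y) ∈ T.graph → S y = x := by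
  simp [HasBoundedInverseShifted]

theorem HasBoundedInverseShifted.eq_zero_of_mem_graph (hT : HasBoundedInverseShifted T z)
    {x : V} (hx : (x, z • x) ∈ T.graph) : x = 0 := by
  obtain ⟨S, -, hS⟩ := hT
  simpa using (hS x _ hx).symm

theorem HasBoundedInverseShifted.isClosed (hT : HasBoundedInverseShifted T z) : T.IsClosed := by
  obtain ⟨S, hS, hS_left⟩ := hT
  have hgraph : (T.graph : Set (V × V)) = {p | S (p.2 - z • p.1) = p.1} := by
    ext ⟨x, y⟩
    refine ⟨hS_left x y, fun hxy => ?_⟩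
    have h := hS (y - z • x)
    rwa [Set.mem_ofPred_eq.mp hxy, sub_add_cancel] at h
  rw [LinearPMap.IsClosed, hgraph]
  exact isClosed_eq (by fun_prop) continuous_fst

theorem hasBoundedInverseShifted_of_forall_mem_graph (S : V →L[ℂ] V)
    (hS : ∀ w, (S w, w + z • S w) ∈ T.graph) (hinj : ∀ x, (x, z • x) ∈ T.graph → x = 0) :
    HasBoundedInverseShifted T z := by
  refine ⟨S, hS, fun x y hxy => ?_⟩
  have h := T.graph.sub_mem hxy (hS (y - z • x))
  rw [Prod.mk_sub_mk, show y - (y - z • x + z • S (y - z • x)) = z • (x - S (y - z • x)) by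
    module] at h
  exact (sub_eq_zero.mp (hinj _ h)).symm

theorem LinearPMap.IsClosed.hasBoundedInverseShifted [CompleteSpace V] (hT : T.IsClosed)
    (hsurj : ∀ w, ∃ x, (x, w + z • x) ∈ T.graph) (hinj : ∀ x, (x, z • x) ∈ T.graph → x = 0) :
    HasBoundedInverseShifted T z := by
  let L : V × V →L[ℂ] V × V := (ContinuousLinearMap.snd ℂ V V).prod
    (ContinuousLinearMap.fst ℂ V V + z • ContinuousLinearMap.snd ℂ V V)
  obtain ⟨S, hS⟩ := Submodule.exists_continuousLinearMap_forall_mem_of_isClosed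
    (g := T.graph.comap (L : V × V →ₗ[ℂ] V × V)) (hT.preimage L.continuous) hsurj
    (fun x hx => hinj x (by simpa [L] using hx))
  exact hasBoundedInverseShifted_of_forall_mem_graph S hS hinj

end BoundedInverse

theorem IsSelfAdjoint.hasBoundedInverseShifted_zero {H : Type*} [NormedAddCommGroup H]
    [InnerProductSpace ℂ H] [CompleteSpace H] {A : H →ₗ.[ℂ] H} (hA : IsSelfAdjoint A) {δ : ℝ}
    (hδ : 0 < δ) (hlow : ∀ x : A.domain, δ * ‖(x : H)‖ ≤ ‖A x‖) :
    HasBoundedInverseShifted A 0 := by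
  refine hA.isClosed.hasBoundedInverseShifted (fun w => ?_) (fun x hx => ?_)
  · obtain ⟨x, rfl⟩ := hA.surjective_of_mul_norm_le hδ hlow w
    refine ⟨x, ?_⟩
    rw [zero_smul, add_zero]
    exact A.mem_graph x
  · rw [zero_smul] at hx
    exact LinearPMap.eq_zero_of_mem_graph_of_mul_norm_le hδ hlow hx

theorem LinearPMap.mem_graph_iff_exists_of_comp {R E F G : Type*} [Ring R] [AddCommGroup E]
    [Module R E] [AddCommGroup F] [Module R F] [AddCommGroup G] [Module R G]
    {T : E →ₗ.[R] F} {S : F →ₗ.[R] G} {U : E →ₗ.[R] G}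
    (hU : ∀ x y, (x, y) ∈ U.graph ↔
      ∃ (hx : x ∈ T.domain) (hTx : T ⟨x, hx⟩ ∈ S.domain), S ⟨T ⟨x, hx⟩, hTx⟩ = y)
    (x : E) (y : G) : (x, y) ∈ U.graph ↔ ∃ w, (x, w) ∈ T.graph ∧ (w, y) ∈ S.graph := by
  rw [hU]
  constructor
  · rintro ⟨hx, hTx, rfl⟩
    exact ⟨_, T.mem_graph ⟨x, hx⟩, S.mem_graph ⟨_, hTx⟩⟩
  · rintro ⟨w, hw, hy⟩
    obtain ⟨x', rfl, rfl⟩ := T.mem_graph_iff.mp hw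
    obtain ⟨w', hw', rfl⟩ := S.mem_graph_iff.mp hy
    change (w' : F) = T x' at hw'
    exact ⟨x'.2, hw' ▸ w'.2, congrArg S (Subtype.ext hw'.symm)⟩

section Algebra

variable {H : Type*} [AddCommGroup H] [Module ℂ H]

def IsPencilAt (B R P : H →ₗ.[ℂ] H) (z : ℂ) : Prop :=
  ∀ x y, (x, y) ∈ P.graph ↔ ∃ w u r, (x, w) ∈ B.graph ∧ (w, u) ∈ B.graph ∧ (x, r) ∈ R.graph ∧
    y = u - (Complex.I * z) • r - z ^ 2 • x

/-- `Q (f, g) = (-i R f + B g, B f)` on `dom B ⊕ dom B`, described through its graph. -/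
def IsDiracOperator (B R : H →ₗ.[ℂ] H) (Q : WithLp 2 (H × H) →ₗ.[ℂ] WithLp 2 (H × H)) : Prop :=
  ∀ f g a b : H, (WithLp.toLp 2 (f, g), WithLp.toLp 2 (a, b)) ∈ Q.graph ↔
    (f, b) ∈ B.graph ∧ ∃ r c, (f, r) ∈ R.graph ∧ (g, c) ∈ B.graph ∧ a = -(Complex.I • r) + c

variable {B R P : H →ₗ.[ℂ] H} {Q : WithLp 2 (H × H) →ₗ.[ℂ] WithLp 2 (H × H)} {z : ℂ}

theorem isPencilAt_of_apply_eq {B2 : H →ₗ.[ℂ] H} (hRdom : B.domain ≤ R.domain)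
    (hB2 : ∀ x y, (x, y) ∈ B2.graph ↔ ∃ w, (x, w) ∈ B.graph ∧ (w, y) ∈ B.graph)
    (hPdom : P.domain = B2.domain)
    (hPval : ∀ (x : P.domain) (hx2 : (x : H) ∈ B2.domain) (hxR : (x : H) ∈ R.domain),
      P x = B2 ⟨x, hx2⟩ - (Complex.I * z) • R ⟨x, hxR⟩ - z ^ 2 • (x : H)) :
    IsPencilAt B R P z := by
  intro x y
  constructor
  · intro h
    obtain ⟨x', rfl, rfl⟩ := P.mem_graph_iff.mp h
    have hx2 : (x' : H) ∈ B2.domain := hPdom ▸ x'.2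
    obtain ⟨w, hw, hu⟩ := (hB2 _ _).mp (B2.mem_graph ⟨x', hx2⟩)
    have hxR : (x' : H) ∈ R.domain := hRdom (B.mem_domain_of_mem_graph hw)
    exact ⟨w, _, _, hw, hu, R.mem_graph ⟨x', hxR⟩, hPval x' hx2 hxR⟩
  · rintro ⟨w, u, r, hw, hu, hr, rfl⟩
    have hxu : (x, u) ∈ B2.graph := (hB2 x u).mpr ⟨w, hw, hu⟩
    have hx2 : x ∈ B2.domain := B2.mem_domain_of_mem_graph hxu
    have hxR : x ∈ R.domain := hRdom (B.mem_domain_of_mem_graph hw)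
    refine P.mem_graph_iff.mpr ⟨⟨x, hPdom ▸ hx2⟩, rfl, ?_⟩
    rw [hPval _ hx2 hxR, B2.mem_graph_snd_inj (B2.mem_graph ⟨x, hx2⟩) hxu rfl,
      R.mem_graph_snd_inj (R.mem_graph ⟨x, hxR⟩) hr rfl]

theorem isDiracOperator_of_apply_eq (hRdom : B.domain ≤ R.domain)
    (hQdom : ∀ x : WithLp 2 (H × H), x ∈ Q.domain ↔ (x.fst ∈ B.domain ∧ x.snd ∈ B.domain))
    (hQval : ∀ (x : Q.domain) (h1 : (x : WithLp 2 (H × H)).fst ∈ B.domain)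
      (h2 : (x : WithLp 2 (H × H)).snd ∈ B.domain) (hR : (x : WithLp 2 (H × H)).fst ∈ R.domain),
      Q x = (WithLp.equiv 2 (H × H)).symm
        (-(Complex.I • R ⟨(x : WithLp 2 (H × H)).fst, hR⟩) + B ⟨(x : WithLp 2 (H × H)).snd, h2⟩,
          B ⟨(x : WithLp 2 (H × H)).fst, h1⟩)) :
    IsDiracOperator B R Q := by
  intro f g a b
  constructor
  · intro h
    obtain ⟨⟨p, hp⟩, hpfg, hQp⟩ := Q.mem_graph_iff.mp h
    dsimp only at hpfg hQp
    subst hpfg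
    obtain ⟨h1, h2⟩ := (hQdom _).mp hp
    have hab := congrArg WithLp.ofLp ((hQval ⟨_, hp⟩ h1 h2 (hRdom h1)).symm.trans hQp)
    obtain ⟨rfl, rfl⟩ := Prod.ext_iff.mp hab
    exact ⟨B.mem_graph ⟨f, h1⟩, _, _, R.mem_graph ⟨f, hRdom h1⟩, B.mem_graph ⟨g, h2⟩, rfl⟩
  · rintro ⟨hfb, r, c, hr, hgc, rfl⟩
    have h1 := B.mem_domain_of_mem_graph hfb
    have h2 := B.mem_domain_of_mem_graph hgc
    have hfg : WithLp.toLp 2 (f, g) ∈ Q.domain := (hQdom _).mpr ⟨h1, h2⟩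
    refine Q.mem_graph_iff.mpr ⟨⟨_, hfg⟩, rfl, ?_⟩
    rw [hQval ⟨_, hfg⟩ h1 h2 (hRdom h1)]
    change WithLp.toLp 2 (-(Complex.I • R ⟨f, hRdom h1⟩) + B ⟨g, h2⟩, B ⟨f, h1⟩) =
      WithLp.toLp 2 (-(Complex.I • r) + c, b)
    rw [B.mem_graph_snd_inj (B.mem_graph ⟨f, h1⟩) hfb rfl,
      B.mem_graph_snd_inj (B.mem_graph ⟨g, h2⟩) hgc rfl,
      R.mem_graph_snd_inj (R.mem_graph ⟨f, hRdom h1⟩) hr rfl]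

theorem IsPencilAt.mem_graph_of_dirac (hP : IsPencilAt B R P z) (hQ : IsDiracOperator B R Q)
    {f g f₀ w : H} (hf₀ : (f₀, w) ∈ B.graph)
    (h : (WithLp.toLp 2 (f, g), WithLp.toLp 2 (z • f, f₀ + z • g)) ∈ Q.graph) :
    (f, w) ∈ P.graph := by
  obtain ⟨hf, r, c, hr, hc, ha⟩ := (hQ _ _ _ _).mp h
  have hBB : (f₀ + z • g, w + z • c) ∈ B.graph := by
    simpa using B.graph.add_mem hf₀ (B.graph.smul_mem z hc)
  refine (hP _ _).mpr ⟨_, _, r, hf, hBB, hr, ?_⟩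
  linear_combination (norm := module) z • ha

theorem IsPencilAt.eq_zero_of_dirac (hP : IsPencilAt B R P z) (hQ : IsDiracOperator B R Q)
    (hBsurj : ∀ y, ∃ x, (x, y) ∈ B.graph) (hBinj : ∀ x, (x, 0) ∈ B.graph → x = 0)
    (hQinj : ∀ p, (p, z • p) ∈ Q.graph → p = 0) {x : H} (hx : (x, 0) ∈ P.graph) : x = 0 := by
  obtain ⟨w, u, r, hw, hu, hr, h0⟩ := (hP _ _).mp hx
  obtain ⟨g, hg⟩ := hBsurj (Complex.I • r + z • x)
  have hwg : w = z • g := by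
    refine sub_eq_zero.mp (hBinj _ ?_)
    have h := B.graph.sub_mem hu (B.graph.smul_mem z hg)
    rw [Prod.smul_mk, Prod.mk_sub_mk] at h
    convert h using 2
    linear_combination (norm := module) h0
  have hQx : (WithLp.toLp 2 (x, g), z • WithLp.toLp 2 (x, g)) ∈ Q.graph := by
    rw [← WithLp.toLp_smul, Prod.smul_mk]
    exact (hQ _ _ _ _).mpr ⟨hwg ▸ hw, r, _, hr, hg, by abel⟩
  simpa using congrArg (fun p => (WithLp.ofLp p).1) (hQinj _ hQx)

theorem IsDiracOperator.exists_mem_graph_of_pencil (hP : IsPencilAt B R P z)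
    (hQ : IsDiracOperator B R Q) {u v f₀ r₀ h : H} (hf₀ : (f₀, v) ∈ B.graph)
    (hr₀ : (f₀, r₀) ∈ R.graph) (hh : (h, u + Complex.I • r₀ + z • f₀) ∈ P.graph) :
    ∃ g, (WithLp.toLp 2 (f₀ + z • h, g), WithLp.toLp 2 (u + z • (f₀ + z • h), v + z • g)) ∈
      Q.graph := by
  obtain ⟨w, c, r, hw, hc, hr, hq⟩ := (hP _ _).mp hh
  refine ⟨w, (hQ _ _ _ _).mpr ⟨?_, r₀ + z • r, c, ?_, hc, ?_⟩⟩
  · simpa using B.graph.add_mem hf₀ (B.graph.smul_mem z hw)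
  · simpa using R.graph.add_mem hr₀ (R.graph.smul_mem z hr)
  · linear_combination (norm := module) hq

theorem IsDiracOperator.eq_zero_of_pencil (hP : IsPencilAt B R P z) (hQ : IsDiracOperator B R Q)
    (hBinj : ∀ x, (x, 0) ∈ B.graph → x = 0) (hPinj : ∀ x, (x, 0) ∈ P.graph → x = 0) {f g : H}
    (h : (WithLp.toLp 2 (f, g), WithLp.toLp 2 (z • f, z • g)) ∈ Q.graph) : f = 0 ∧ g = 0 := by
  obtain ⟨hf, r, c, hr, hc, ha⟩ := (hQ _ _ _ _).mp h
  have hf0 : f = 0 := by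
    refine hPinj f ((hP _ _).mpr ⟨_, _, r, hf, B.graph.smul_mem z hc, hr, ?_⟩)
    linear_combination (norm := module) z • ha
  subst hf0
  obtain rfl : r = 0 := R.graph_fst_eq_zero_snd hr rfl
  have hc0 : c = 0 := by simpa using ha.symm
  exact ⟨rfl, hBinj g (hc0 ▸ hc)⟩

end Algebra

section Analysis

variable {H : Type*} [NormedAddCommGroup H] [NormedSpace ℂ H]
  {B R P : H →ₗ.[ℂ] H} {Q : WithLp 2 (H × H) →ₗ.[ℂ] WithLp 2 (H × H)} {z : ℂ}

theorem IsDiracOperator.isClosed (hQ : IsDiracOperator B R Q) (hB : B.IsClosed) {K : H →L[ℂ] H}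
    (hK : ∀ f b, (f, b) ∈ B.graph → (f, K b) ∈ R.graph) : Q.IsClosed := by
  have hgraph : (Q.graph : Set (WithLp 2 (H × H) × WithLp 2 (H × H))) =
      {p | (p.1.fst, p.2.snd) ∈ B.graph} ∩
        {p | (p.1.snd, p.2.fst + Complex.I • K p.2.snd) ∈ B.graph} := by
    ext ⟨⟨f, g⟩, ⟨a, b⟩⟩
    simp only [SetLike.mem_coe, Set.mem_inter_iff, Set.mem_ofPred_eq, WithLp.toLp_fst,
      WithLp.toLp_snd]
    rw [hQ f g a b]
    constructor
    · rintro ⟨hf, r, c, hr, hc, rfl⟩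
      obtain rfl : r = K b := R.mem_graph_snd_inj hr (hK f b hf) rfl
      exact ⟨hf, by simpa using hc⟩
    · rintro ⟨hf, hc⟩
      exact ⟨hf, K b, _, hK f b hf, hc, by abel⟩
  rw [LinearPMap.IsClosed, hgraph]
  exact (hB.preimage (by fun_prop)).inter (hB.preimage (by fun_prop))

theorem IsPencilAt.hasBoundedInverseShifted_of_dirac (hP : IsPencilAt B R P z)
    (hQ : IsDiracOperator B R Q) (hB : HasBoundedInverseShifted B 0)
    (hQz : HasBoundedInverseShifted Q z) : HasBoundedInverseShifted P 0 := by
  obtain ⟨Binv, hBinv, hBinv_left⟩ := hasBoundedInverseShifted_zero_iff.mp hB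
  have hQinj : ∀ p, (p, z • p) ∈ Q.graph → p = 0 := fun p hp => hQz.eq_zero_of_mem_graph hp
  obtain ⟨SQ, hSQ, -⟩ := hQz
  let e := WithLp.prodContinuousLinearEquiv 2 ℂ H H
  let SP : H →L[ℂ] H := ContinuousLinearMap.fst ℂ H H ∘L (e : _ →L[ℂ] _) ∘L SQ ∘L
    (e.symm : _ →L[ℂ] _) ∘L (0 : H →L[ℂ] H).prod Binv
  refine hasBoundedInverseShifted_of_forall_mem_graph SP (fun w => ?_) (fun x hx => ?_)
  · rw [zero_smul, add_zero]
    change ((SQ (WithLp.toLp 2 (0, Binv w))).fst, w) ∈ P.graph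
    have h := hSQ (WithLp.toLp 2 (0, Binv w))
    generalize SQ (WithLp.toLp 2 (0, Binv w)) = p at h ⊢
    obtain ⟨f, g⟩ := p
    rw [← WithLp.toLp_smul, ← WithLp.toLp_add, Prod.smul_mk, Prod.mk_add_mk, zero_add] at h
    exact hP.mem_graph_of_dirac hQ (hBinv w) h
  · rw [zero_smul] at hx
    exact hP.eq_zero_of_dirac hQ (fun y => ⟨Binv y, hBinv y⟩)
      (fun x hx => by rw [← hBinv_left x 0 hx, map_zero]) hQinj hx

theorem IsDiracOperator.hasBoundedInverseShifted_of_pencil [CompleteSpace H]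
    (hP : IsPencilAt B R P z) (hQ : IsDiracOperator B R Q) (hB : HasBoundedInverseShifted B 0)
    (hR : R.IsClosable) (hRdom : B.domain ≤ R.domain) (hPz : HasBoundedInverseShifted P 0) :
    HasBoundedInverseShifted Q z := by
  obtain ⟨Binv, hBinv, hBinv_left⟩ := hasBoundedInverseShifted_zero_iff.mp hB
  obtain ⟨SP, hSP, hSP_left⟩ := hasBoundedInverseShifted_zero_iff.mp hPz
  obtain ⟨K, hK⟩ := hR.exists_continuousLinearMap_comp_s9 Binv
    fun y => hRdom (B.mem_domain_of_mem_graph (hBinv y))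
  have hRK : ∀ f b, (f, b) ∈ B.graph → (f, K b) ∈ R.graph := fun f b hfb =>
    hBinv_left f b hfb ▸ hK b
  refine (hQ.isClosed hB.isClosed hRK).hasBoundedInverseShifted (fun w => ?_) (fun p hp => ?_)
  · obtain ⟨u, v⟩ := w
    obtain ⟨g, hg⟩ := hQ.exists_mem_graph_of_pencil hP (hBinv v) (hK v)
      (hSP (u + Complex.I • K v + z • Binv v))
    exact ⟨_, hg⟩
  · obtain ⟨f, g⟩ := p
    obtain ⟨rfl, rfl⟩ := hQ.eq_zero_of_pencil hP
      (fun x hx => by rw [← hBinv_left x 0 hx, map_zero])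
      (fun x hx => by rw [← hSP_left x 0 hx, map_zero]) hp
    rfl

end Analysis

theorem spectrum_dirac_eq_spectrum_pencil_general
    {H : Type*}
    [NormedAddCommGroup H] [InnerProductSpace ℂ H] [CompleteSpace H]
    (B : H →ₗ.[ℂ] H)
    (hBsa : B.adjoint = B)
    (δ : ℝ) (hδ : 0 < δ)
    (hBpos : ∀ f : B.domain, δ * ‖(f : H)‖ ^ 2 ≤ (⟪(f : H), B f⟫_ℂ).re)
    (R : H →ₗ.[ℂ] H)
    (hRclosable : R.IsClosable)
    (hRdom : B.domain ≤ R.domain)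
    -- `B² = B ∘ B` with its natural domain:
    (B2 : H →ₗ.[ℂ] H)
    (hB2 : ∀ (x y : H), (x, y) ∈ B2.graph ↔
      ∃ (hx : x ∈ B.domain) (hBx : B ⟨x, hx⟩ ∈ B.domain), B ⟨B ⟨x, hx⟩, hBx⟩ = y)
    -- the pencil `M(z) = B² − i z R − z² I` with `dom(M(z)) = dom(B²)`:
    (M : ℂ → (H →ₗ.[ℂ] H))
    (hMdom : ∀ z : ℂ, (M z).domain = B2.domain)
    (hMval : ∀ (z : ℂ) (x : (M z).domain) (hx2 : (x : H) ∈ B2.domain)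
      (hxR : (x : H) ∈ R.domain),
      M z x = B2 ⟨(x : H), hx2⟩ - (Complex.I * z) • R ⟨(x : H), hxR⟩ - z ^ 2 • (x : H))
    -- the Dirac-type operator `Q(f,g) = (−iRf + Bg, Bf)`, `dom(Q) = dom(B) ⊕ dom(B)`:
    (Q : WithLp 2 (H × H) →ₗ.[ℂ] WithLp 2 (H × H))
    (hQdom : ∀ x : WithLp 2 (H × H), x ∈ Q.domain ↔
      (x.fst ∈ B.domain ∧ x.snd ∈ B.domain))
    (hQval : ∀ (x : Q.domain) (h1 : (x : WithLp 2 (H × H)).fst ∈ B.domain)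
      (h2 : (x : WithLp 2 (H × H)).snd ∈ B.domain)
      (hR : (x : WithLp 2 (H × H)).fst ∈ R.domain),
      Q x = (WithLp.equiv 2 (H × H)).symm
        (-(Complex.I • R ⟨(x : WithLp 2 (H × H)).fst, hR⟩) + B ⟨(x : WithLp 2 (H × H)).snd, h2⟩,
          B ⟨(x : WithLp 2 (H × H)).fst, h1⟩)) :
    (∀ z : ℂ, HasBoundedInverseShifted Q z ↔ HasBoundedInverseShifted (M z) 0) ∧
    {z : ℂ | ¬ HasBoundedInverseShifted Q z} =
      {z : ℂ | ¬ HasBoundedInverseShifted (M z) 0} := by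
  have hB : HasBoundedInverseShifted B 0 := IsSelfAdjoint.hasBoundedInverseShifted_zero hBsa hδ
    (LinearPMap.mul_norm_le_norm_apply_of_mul_sq_le_re_inner hBpos)
  have hQ : IsDiracOperator B R Q := isDiracOperator_of_apply_eq hRdom hQdom hQval
  have hM : ∀ z, IsPencilAt B R (M z) z := fun z =>
    isPencilAt_of_apply_eq hRdom (LinearPMap.mem_graph_iff_exists_of_comp hB2) (hMdom z) (hMval z)
  have key : ∀ z, HasBoundedInverseShifted Q z ↔ HasBoundedInverseShifted (M z) 0 := fun z =>
    ⟨(hM z).hasBoundedInverseShifted_of_dirac hQ hB,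
      hQ.hasBoundedInverseShifted_of_pencil (hM z) hB hRclosable hRdom⟩
  exact ⟨key, Set.ext fun z => not_congr (key z)⟩

/-- Theorem 4.3, spectral part. Let `B` be self-adjoint in `H` with
`B ≥ δ I`, `δ > 0`, and `R` densely defined closable with `dom(R) ⊇ dom(B)`.  Let `Q` be the
Dirac-type operator `Q(f,g) = (−iRf + Bg, Bf)` on `dom(B) ⊕ dom(B)` in `H ⊕ H` and let
`M(z) = B² − izR − z²I` on `dom(B²)` be the quadratic pencil.  Then for every `z ∈ ℂ`,
`Q − zI` is boundedly invertible iff `M(z)` is boundedly invertible; consequently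
`σ(Q) = σ(M(·))`. -/
theorem spectrum_dirac_eq_spectrum_pencil
    {H : Type*}
    [NormedAddCommGroup H] [InnerProductSpace ℂ H] [CompleteSpace H]
    [TopologicalSpace.SeparableSpace H]
    (B : H →ₗ.[ℂ] H)
    (hBdense : Dense (B.domain : Set H))
    (hBsa : B.adjoint = B)
    (δ : ℝ) (hδ : 0 < δ)
    (hBpos : ∀ f : B.domain, δ * ‖(f : H)‖ ^ 2 ≤ (⟪(f : H), B f⟫_ℂ).re)
    (R : H →ₗ.[ℂ] H)
    (hRdense : Dense (R.domain : Set H))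
    (hRclosable : R.IsClosable)
    (hRdom : B.domain ≤ R.domain)
    -- `B² = B ∘ B` with its natural domain:
    (B2 : H →ₗ.[ℂ] H)
    (hB2 : ∀ (x y : H), (x, y) ∈ B2.graph ↔
      ∃ (hx : x ∈ B.domain) (hBx : B ⟨x, hx⟩ ∈ B.domain), B ⟨B ⟨x, hx⟩, hBx⟩ = y)
    -- the pencil `M(z) = B² − i z R − z² I` with `dom(M(z)) = dom(B²)`:
    (M : ℂ → (H →ₗ.[ℂ] H))
    (hMdom : ∀ z : ℂ, (M z).domain = B2.domain)
    (hMval : ∀ (z : ℂ) (x : (M z).domain) (hx2 : (x : H) ∈ B2.domain)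
      (hxR : (x : H) ∈ R.domain),
      M z x = B2 ⟨(x : H), hx2⟩ - (Complex.I * z) • R ⟨(x : H), hxR⟩ - z ^ 2 • (x : H))
    -- the Dirac-type operator `Q(f,g) = (−iRf + Bg, Bf)`, `dom(Q) = dom(B) ⊕ dom(B)`:
    (Q : WithLp 2 (H × H) →ₗ.[ℂ] WithLp 2 (H × H))
    (hQdom : ∀ x : WithLp 2 (H × H), x ∈ Q.domain ↔
      (x.fst ∈ B.domain ∧ x.snd ∈ B.domain))
    (hQval : ∀ (x : Q.domain) (h1 : (x : WithLp 2 (H × H)).fst ∈ B.domain)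
      (h2 : (x : WithLp 2 (H × H)).snd ∈ B.domain)
      (hR : (x : WithLp 2 (H × H)).fst ∈ R.domain),
      Q x = (WithLp.equiv 2 (H × H)).symm
        (-(Complex.I • R ⟨(x : WithLp 2 (H × H)).fst, hR⟩) + B ⟨(x : WithLp 2 (H × H)).snd, h2⟩,
          B ⟨(x : WithLp 2 (H × H)).fst, h1⟩)) :
    (∀ z : ℂ, HasBoundedInverseShifted Q z ↔ HasBoundedInverseShifted (M z) 0) ∧
    {z : ℂ | ¬ HasBoundedInverseShifted Q z} =
      {z : ℂ | ¬ HasBoundedInverseShifted (M z) 0} :=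
  spectrum_dirac_eq_spectrum_pencil_general B hBsa δ hδ hBpos R hRclosable hRdom B2 hB2 M hMdom
    hMval Q hQdom hQval
end
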